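/- arXiv:2505.12931 — 11 statements merged into one kernel-verified Lean document; each statement's English description precedes it below -/
import Mathlib

section
/- Let X and Y be Hilbert spaces and A : X → Y a bounded linear operator. Then A is strictly singular if and only if A is a compact operator. -/
open scoped RealInnerProductSpace

noncomputable def seqOf {X : Type*} (g : Set X → X) : ℕ → X
  | n => g (Set.range fun i : Fin n => seqOf g i)
  decreasing_by exact i.isLt

theorem seqOf_eq {X : Type*} (g : Set X → X) (n : ℕ) :
    seqOf g n = g (Set.range fun i : Fin n => seqOf g i) := by
  rw [seqOf]

lemma aux_normsq {ι Y : Type*} [NormedAddCommGroup Y] [InnerProductSpace ℝ Y]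
    (s : Finset ι) (c : ι → ℝ) (f : ι → Y)
    (h : ∀ i ∈ s, ∀ j ∈ s, i ≠ j → ⟪f i, f j⟫ = (0:ℝ)) :
    ‖∑ i ∈ s, c i • f i‖^2 = ∑ i ∈ s, (c i)^2 * ‖f i‖^2 := by
  rw [← real_inner_self_eq_norm_sq, sum_inner]
  refine Finset.sum_congr rfl fun i hi => ?_
  rw [inner_sum, Finset.sum_eq_single i]
  · rw [real_inner_smul_left, real_inner_smul_right, real_inner_self_eq_norm_sq]; ring
  · intro j hj hne
    rw [real_inner_smul_left, real_inner_smul_right, h i hi j hj (Ne.symm hne)]; ring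
  · intro hni; exact absurd hi hni

/-- In Hilbert spaces, a bounded linear operator is strictly singular if and only if it is
compact (the image of the unit ball is relatively compact). -/
theorem stmt_1
    {X Y : Type*} [NormedAddCommGroup X] [InnerProductSpace ℝ X] [CompleteSpace X]
    [NormedAddCommGroup Y] [InnerProductSpace ℝ Y] [CompleteSpace Y]
    (A : X →L[ℝ] Y) :
    (∀ M : Submodule ℝ X, (∃ c > 0, ∀ x ∈ M, c * ‖x‖ ≤ ‖A x‖) → FiniteDimensional ℝ M)
      ↔ IsCompact (closure (⇑A '' Metric.closedBall 0 1)) := by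
  constructor
  · intro h
    have hTB : TotallyBounded (⇑A '' Metric.closedBall 0 1) := by
      by_contra hTB
      rw [Metric.totallyBounded_iff] at hTB
      push_neg at hTB
      obtain ⟨ε, hε, hcov⟩ := hTB
      set ε3 : ℝ := ε / 3 with hε3def
      have hε3 : 0 < ε3 := by positivity
      -- key claim: for every finite-dimensional F there is a unit vector in Fᗮ with ‖A x‖ ≥ ε3
      have hF : ∀ F : Submodule ℝ X, FiniteDimensional ℝ F →
          ∃ x : X, ‖x‖ = 1 ∧ x ∈ Fᗮ ∧ ε3 ≤ ‖A x‖ := by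
        by_contra hns
        push_neg at hns
        obtain ⟨F, hFd, hsmall⟩ := hns
        -- rescale
        have hbound : ∀ x ∈ Fᗮ, ‖A x‖ ≤ ε3 * ‖x‖ := by
          intro x hx
          rcases eq_or_ne x 0 with rfl | hx0
          · simp
          · have hxn : (0:ℝ) < ‖x‖ := norm_pos_iff.mpr hx0
            have h1 : ‖(‖x‖⁻¹ • x)‖ = 1 := by
              rw [norm_smul, norm_inv, norm_norm, inv_mul_cancel₀ hxn.ne']
            have h2 : (‖x‖⁻¹ • x) ∈ Fᗮ := Fᗮ.smul_mem _ hx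
            have h3 := hsmall _ h1 h2
            rw [map_smul, norm_smul, norm_inv, norm_norm] at h3
            have := (lt_of_le_of_lt (le_refl _) h3)
            calc ‖A x‖ = ‖x‖ * (‖x‖⁻¹ * ‖A x‖) := by field_simp
              _ ≤ ‖x‖ * ε3 := by nlinarith
              _ = ε3 * ‖x‖ := mul_comm _ _
        haveI := hFd
        haveI : CompleteSpace F := FiniteDimensional.complete ℝ F
        -- compact approximating set
        have hK : IsCompact (⇑A '' ((F : Set X) ∩ Metric.closedBall 0 1)) := by
          have : (F : Set X) ∩ Metric.closedBall 0 1
              = Subtype.val '' (Metric.closedBall (0 : F) 1) := by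
            ext x
            simp only [Set.mem_inter_iff, Set.mem_image, Metric.mem_closedBall,
              dist_zero_right]
            constructor
            · rintro ⟨hxF, hx1⟩; exact ⟨⟨x, hxF⟩, by simpa using hx1, rfl⟩
            · rintro ⟨⟨y, hy⟩, h1, rfl⟩
              exact ⟨hy, by simpa using h1⟩
          rw [this]
          exact ((isCompact_closedBall _ _).image continuous_subtype_val).image A.continuous
        obtain ⟨t, htf, htc⟩ := Metric.totallyBounded_iff.mp hK.totallyBounded ε3 hε3
        refine hcov t htf ?_
        rintro - ⟨x, hx, rfl⟩
        rw [Metric.mem_closedBall, dist_zero_right] at hx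
        set P : X := (F.orthogonalProjectionOnto x : X) with hP
        have hPF : P ∈ F := SetLike.coe_mem _
        have hPn : ‖P‖ ≤ 1 := by
          calc ‖P‖ = ‖F.orthogonalProjectionOnto x‖ := rfl
            _ ≤ ‖x‖ := Submodule.orthogonalProjectionOnto_norm_le F |>.trans (le_refl 1) |> fun h => by
                have := (F.orthogonalProjectionOnto).le_opNorm x
                calc ‖F.orthogonalProjectionOnto x‖ ≤ ‖F.orthogonalProjectionOnto‖ * ‖x‖ := this
                  _ ≤ 1 * ‖x‖ := by
                      exact mul_le_mul_of_nonneg_right (Submodule.orthogonalProjectionOnto_norm_le F)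
                        (norm_nonneg x)
                  _ = ‖x‖ := one_mul _
            _ ≤ 1 := hx
        have hAPK : A P ∈ ⇑A '' ((F : Set X) ∩ Metric.closedBall 0 1) := by
          exact Set.mem_image_of_mem _ ⟨hPF, by simpa [dist_zero_right] using hPn⟩
        obtain ⟨y, hyt, hyb⟩ := by
          have := htc hAPK
          simpa only [Set.mem_iUnion, exists_prop] using this
        refine Set.mem_iUnion₂.mpr ⟨y, hyt, ?_⟩
        rw [Metric.mem_ball]
        have hxP : x - P ∈ Fᗮ := Submodule.sub_starProjection_mem_orthogonal (K := F) x
        have hdiff : ‖A x - A P‖ ≤ 2 * ε3 := by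
          have : A x - A P = A (x - P) := by rw [map_sub]
          rw [this]
          calc ‖A (x - P)‖ ≤ ε3 * ‖x - P‖ := hbound _ hxP
            _ ≤ ε3 * 2 := by
                have : ‖x - P‖ ≤ 2 := by
                  calc ‖x - P‖ ≤ ‖x‖ + ‖P‖ := norm_sub_le _ _
                    _ ≤ 1 + 1 := add_le_add hx hPn
                    _ = 2 := by norm_num
                nlinarith
            _ = 2 * ε3 := mul_comm _ _
        calc dist (A x) y ≤ dist (A x) (A P) + dist (A P) y := dist_triangle _ _ _
          _ < 2 * ε3 + ε3 := by
              refine add_lt_add_of_le_of_lt ?_ (Metric.mem_ball.mp hyb)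
              rw [dist_eq_norm]; exact hdiff
          _ = ε := by rw [hε3def]; ring
      -- now build an orthonormal sequence on which A is bounded below
      have key : ∀ s : Set X, s.Finite →
          ∃ x : X, ‖x‖ = 1 ∧ (∀ u ∈ s, ⟪u, x⟫ = (0:ℝ) ∧ ⟪A u, A x⟫ = (0:ℝ)) ∧
            ε3 ≤ ‖A x‖ := by
        intro s hs
        have hfin : FiniteDimensional ℝ
            (Submodule.span ℝ (s ∪ (fun u => (ContinuousLinearMap.adjoint A) (A u)) '' s)) :=
          FiniteDimensional.span_of_finite ℝ (hs.union (hs.image _))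
        obtain ⟨x, hx1, hxo, hxA⟩ := hF _ hfin
        refine ⟨x, hx1, fun u hu => ⟨?_, ?_⟩, hxA⟩
        · exact (Submodule.mem_orthogonal _ x).mp hxo u
            (Submodule.subset_span (Or.inl hu))
        · have h2 := (Submodule.mem_orthogonal _ x).mp hxo _
            (Submodule.subset_span (Or.inr ⟨u, hu, rfl⟩))
          rwa [ContinuousLinearMap.adjoint_inner_left] at h2
      have key' : ∀ s : Set X, ∃ x : X, s.Finite →
          (‖x‖ = 1 ∧ (∀ u ∈ s, ⟪u, x⟫ = (0:ℝ) ∧ ⟪A u, A x⟫ = (0:ℝ)) ∧ ε3 ≤ ‖A x‖) := by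
        intro s
        by_cases hs : s.Finite
        · exact (key s hs).imp fun x hx _ => hx
        · exact ⟨0, fun h => absurd h hs⟩
      set g : Set X → X := fun s => (key' s).choose with hg
      set e : ℕ → X := seqOf g with he
      have hgspec : ∀ (s : Set X), s.Finite →
          (‖g s‖ = 1 ∧ (∀ u ∈ s, ⟪u, g s⟫ = (0:ℝ) ∧ ⟪A u, A (g s)⟫ = (0:ℝ)) ∧
            ε3 ≤ ‖A (g s)‖) :=
        fun s hs => (key' s).choose_spec hs
      have heprop : ∀ n : ℕ, ‖e n‖ = 1 ∧
          (∀ i, i < n → ⟪e i, e n⟫ = (0:ℝ) ∧ ⟪A (e i), A (e n)⟫ = (0:ℝ)) ∧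
          ε3 ≤ ‖A (e n)‖ := by
        intro n
        have hfin : (Set.range fun i : Fin n => seqOf g i).Finite := Set.finite_range _
        have hdef : e n = g (Set.range fun i : Fin n => seqOf g i) := by
          rw [he, seqOf_eq]
        obtain ⟨h1, h2, h3⟩ := hgspec _ hfin
        refine ⟨hdef ▸ h1, fun i hi => ?_, hdef ▸ h3⟩
        have hmem : e i ∈ Set.range fun j : Fin n => seqOf g j := ⟨⟨i, hi⟩, rfl⟩
        have h4 := h2 (e i) hmem
        rw [← hdef] at h4
        exact h4
      -- pairwise orthogonality
      have horthX : ∀ i j : ℕ, i ≠ j → ⟪e i, e j⟫ = (0:ℝ) := by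
        intro i j hij
        rcases lt_or_gt_of_ne hij with h | h
        · exact ((heprop j).2.1 i h).1
        · rw [real_inner_comm]; exact ((heprop i).2.1 j h).1
      have horthY : ∀ i j : ℕ, i ≠ j → ⟪A (e i), A (e j)⟫ = (0:ℝ) := by
        intro i j hij
        rcases lt_or_gt_of_ne hij with h | h
        · exact ((heprop j).2.1 i h).2
        · rw [real_inner_comm]; exact ((heprop i).2.1 j h).2
      set M : Submodule ℝ X := Submodule.span ℝ (Set.range e) with hM
      have hMb : ∀ x ∈ M, ε3 * ‖x‖ ≤ ‖A x‖ := by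
        intro x hx
        rw [hM, Finsupp.mem_span_range_iff_exists_finsupp] at hx
        obtain ⟨cc, rfl⟩ := hx
        have hxsum : (cc.sum fun i a => a • e i) = ∑ i ∈ cc.support, cc i • e i := rfl
        rw [hxsum]
        have hxn : ‖∑ i ∈ cc.support, cc i • e i‖^2 = ∑ i ∈ cc.support, (cc i)^2 := by
          rw [aux_normsq _ _ _ (fun i _ j _ hij => horthX i j hij)]
          refine Finset.sum_congr rfl fun i _ => ?_
          rw [(heprop i).1]; ring
        have hAx : A (∑ i ∈ cc.support, cc i • e i) = ∑ i ∈ cc.support, cc i • A (e i) := by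
          rw [map_sum]; simp [map_smul]
        have hAn : ‖A (∑ i ∈ cc.support, cc i • e i)‖^2
            = ∑ i ∈ cc.support, (cc i)^2 * ‖A (e i)‖^2 := by
          rw [hAx, aux_normsq _ _ _ (fun i _ j _ hij => horthY i j hij)]
        have hineq : (ε3 * ‖∑ i ∈ cc.support, cc i • e i‖)^2
            ≤ ‖A (∑ i ∈ cc.support, cc i • e i)‖^2 := by
          rw [hAn, mul_pow, hxn, Finset.mul_sum]
          refine Finset.sum_le_sum fun i _ => ?_
          have h1 : ε3^2 ≤ ‖A (e i)‖^2 := by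
            have := (heprop i).2.2
            nlinarith [norm_nonneg (A (e i))]
          nlinarith [sq_nonneg (cc i)]
        have h0 : (0:ℝ) ≤ ε3 * ‖∑ i ∈ cc.support, cc i • e i‖ :=
          mul_nonneg hε3.le (norm_nonneg _)
        nlinarith [norm_nonneg (A (∑ i ∈ cc.support, cc i • e i))]
      haveI hMfd : FiniteDimensional ℝ M := h M ⟨ε3, hε3, hMb⟩
      -- contradiction: M contains an infinite orthonormal family
      have hON : Orthonormal ℝ e := by
        rw [orthonormal_iff_ite]
        intro i j
        by_cases hij : i = j
        · subst hij
          simp only [if_pos rfl]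
          rw [real_inner_self_eq_norm_sq, (heprop i).1]; norm_num
        · rw [if_neg hij]; exact horthX i j hij
      have hLI : LinearIndependent ℝ e := hON.linearIndependent
      set v : ℕ → M := fun n => ⟨e n, Submodule.subset_span (Set.mem_range_self n)⟩ with hv
      have hLIv : LinearIndependent ℝ v := by
        apply LinearIndependent.of_comp M.subtype
        convert hLI
        rfl
      have hLIw : LinearIndependent ℝ (v ∘ (Fin.val : Fin (Module.finrank ℝ M + 1) → ℕ)) :=
        hLIv.comp _ Fin.val_injective
      have hcard := hLIw.fintype_card_le_finrank
      simp only [Fintype.card_fin] at hcard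
      omega
    exact TotallyBounded.isCompact_of_isClosed hTB.closure isClosed_closure
  · intro hC M hM
    obtain ⟨c, hc, hb⟩ := hM
    set N := M.topologicalClosure with hN
    have hNb : ∀ x ∈ N, c * ‖x‖ ≤ ‖A x‖ := by
      intro x hx
      have hcl : closure (M : Set X) ⊆ {x : X | c * ‖x‖ ≤ ‖A x‖} := by
        apply closure_minimal hb
        exact isClosed_le (continuous_const.mul continuous_norm)
          (continuous_norm.comp A.continuous)
      exact hcl (by rwa [← Submodule.topologicalClosure_coe M] )
    have hNc : IsClosed (N : Set X) := Submodule.isClosed_topologicalClosure M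
    have hKtb : TotallyBounded ((N : Set X) ∩ Metric.closedBall 0 1) := by
      rw [Metric.totallyBounded_iff]
      intro ε hε
      have hAK : TotallyBounded (⇑A '' ((N : Set X) ∩ Metric.closedBall 0 1)) := by
        apply hC.totallyBounded.subset
        exact (Set.image_mono Set.inter_subset_right).trans subset_closure
      obtain ⟨t, hts, htf, hcovt⟩ := totallyBounded_iff_subset.mp hAK
        {p : Y × Y | dist p.1 p.2 < c * ε} (Metric.dist_mem_uniformity (by positivity))
      have hpre : ∀ y ∈ t, ∃ x, (x ∈ (N : Set X) ∩ Metric.closedBall 0 1) ∧ A x = y := by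
        intro y hy
        obtain ⟨x, hx, rfl⟩ := hts hy
        exact ⟨x, hx, rfl⟩
      choose! f hf1 hf2 using hpre
      refine ⟨f '' t, htf.image f, ?_⟩
      intro x hx
      have hAx : A x ∈ ⇑A '' ((N : Set X) ∩ Metric.closedBall 0 1) :=
        Set.mem_image_of_mem _ hx
      obtain ⟨y, hyt, hyd⟩ := by
        have := hcovt hAx
        simpa only [Set.mem_iUnion, exists_prop] using this
      refine Set.mem_iUnion₂.mpr ⟨f y, Set.mem_image_of_mem f hyt, ?_⟩
      rw [Metric.mem_ball]
      have hfy := hf1 y hyt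
      have hsub : x - f y ∈ N := Submodule.sub_mem N hx.1 hfy.1
      have hlow : c * ‖x - f y‖ ≤ ‖A (x - f y)‖ := hNb _ hsub
      have : ‖A (x - f y)‖ < c * ε := by
        rw [map_sub, ← dist_eq_norm, hf2 y hyt]
        exact hyd
      rw [dist_eq_norm]
      by_contra hge
      push_neg at hge
      nlinarith
    have hKcomp : IsCompact ((N : Set X) ∩ Metric.closedBall 0 1) :=
      TotallyBounded.isCompact_of_isClosed hKtb (hNc.inter Metric.isClosed_closedBall)
    haveI : FiniteDimensional ℝ N := by
      apply FiniteDimensional.of_isCompact_closedBall₀ ℝ (r := 1) one_pos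
      rw [Subtype.isCompact_iff]
      convert hKcomp using 1
      ext x
      simp only [Set.mem_image, Metric.mem_closedBall, dist_zero_right, Set.mem_inter_iff]
      constructor
      · rintro ⟨⟨y, hy⟩, h1, rfl⟩
        exact ⟨hy, by simpa using h1⟩
      · rintro ⟨hxN, hx1⟩
        exact ⟨⟨x, hxN⟩, by simpa using hx1, rfl⟩
    exact Submodule.finiteDimensional_of_le M.le_topologicalClosure
end

section
/- Let p, q ∈ [1, ∞) with p ≠ q. Then every bounded linear operator A : ℓ^p → ℓ^q is strictly singular. -/
open scoped ENNReal
open Filter Topology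

namespace PittAux

variable {r : ℝ≥0∞}

/-- Truncation of an `lp` element to the first `n` coordinates. -/
noncomputable def trunc (f : lp (fun _ : ℕ => ℝ) r) (n : ℕ) : lp (fun _ : ℕ => ℝ) r :=
  ⟨fun i => if i < n then f i else 0, by
    rcases eq_or_ne r 0 with rfl | h0
    · apply memℓp_zero
      apply Set.Finite.subset (Set.finite_Iio n)
      intro i hi
      simp only [Set.mem_setOf_eq] at hi
      by_contra hn
      simp [Set.mem_Iio, not_lt] at hn
      exact hi (if_neg (not_lt.2 hn))
    rcases eq_or_ne r ∞ with rfl | htop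
    · apply memℓp_infty
      obtain ⟨C, hC⟩ := (lp.memℓp f).bddAbove
      refine ⟨max C 0, ?_⟩
      rintro x ⟨i, rfl⟩
      by_cases hi : i < n
      · simp only [if_pos hi]
        exact le_max_of_le_left (hC ⟨i, rfl⟩)
      · simp [if_neg hi]
    · apply memℓp_gen
      apply summable_of_ne_finset_zero (s := Finset.range n)
      intro i hi
      simp only [Finset.mem_range, not_lt] at hi
      simp [if_neg (not_lt.2 hi), Real.zero_rpow (ENNReal.toReal_ne_zero.2 ⟨h0, htop⟩)]⟩

@[simp] lemma trunc_apply (f : lp (fun _ : ℕ => ℝ) r) (n i : ℕ) :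
    (trunc f n : ∀ _ : ℕ, ℝ) i = if i < n then f i else 0 := rfl

lemma sub_trunc_apply (f : lp (fun _ : ℕ => ℝ) r) (n i : ℕ) :
    ((f - trunc f n : lp (fun _ : ℕ => ℝ) r) : ∀ _ : ℕ, ℝ) i = if i < n then 0 else f i := by
  rw [lp.coeFn_sub]
  simp only [Pi.sub_apply, trunc_apply]
  by_cases h : i < n <;> simp [h]

lemma tail_small (hr : 0 < r.toReal) (f : lp (fun _ : ℕ => ℝ) r) {ε : ℝ} (hε : 0 < ε) (m : ℕ) :
    ∃ n, m < n ∧ ‖f - trunc f n‖ < ε := by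
  set g : ℕ → ℝ := fun i => ‖(f : ∀ _ : ℕ, ℝ) i‖ ^ r.toReal with hgdef
  have hg : Summable g := (lp.memℓp f).summable hr
  have hgnn : ∀ i, 0 ≤ g i := fun i => Real.rpow_nonneg (norm_nonneg _) _
  have hten : Tendsto (fun n => ∑' i, g i - ∑ i ∈ Finset.range n, g i) atTop (𝓝 0) := by
    have := hg.hasSum.tendsto_sum_nat
    simpa using (tendsto_const_nhds (x := ∑' i, g i)).sub this
  have hδ : 0 < (ε / 2) ^ r.toReal := Real.rpow_pos_of_pos (by linarith) _
  obtain ⟨n, hn1, hn2⟩ : ∃ n, m < n ∧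
      ∑' i, g i - ∑ i ∈ Finset.range n, g i < (ε / 2) ^ r.toReal := by
    have h1 : ∀ᶠ n in atTop, ∑' i, g i - ∑ i ∈ Finset.range n, g i < (ε / 2) ^ r.toReal :=
      hten.eventually_lt_const hδ
    exact ((eventually_gt_atTop m).and h1).exists
  refine ⟨n, hn1, lt_of_le_of_lt (lp.norm_le_of_tsum_le hr (by linarith : (0:ℝ) ≤ ε / 2) ?_)
    (by linarith)⟩
  have hsummable_tail : Summable (fun i => if i < n then 0 else g i) :=
    Summable.of_nonneg_of_le (fun i => by by_cases h : i < n <;> simp [h, hgnn i])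
      (fun i => by by_cases h : i < n <;> simp [h, hgnn i]) hg
  have hsummable_head : Summable (fun i => if i < n then g i else 0) :=
    summable_of_ne_finset_zero (s := Finset.range n)
      (fun b hb => by simp [Finset.mem_range] at hb; simp [if_neg (not_lt.2 hb)])
  have hhead : (∑' i, (if i < n then g i else 0)) = ∑ i ∈ Finset.range n, g i := by
    rw [tsum_eq_sum (s := Finset.range n)
      (fun b hb => by simp [Finset.mem_range] at hb; simp [if_neg (not_lt.2 hb)])]
    exact Finset.sum_congr rfl fun i hi => by simp [Finset.mem_range.1 hi]
  have hadd : (∑' i, (if i < n then g i else 0)) + (∑' i, (if i < n then 0 else g i))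
      = ∑' i, g i := by
    rw [← Summable.tsum_add hsummable_head hsummable_tail]
    congr 1; funext i; by_cases h : i < n <;> simp [h]
  have hcoe : ∀ i, ‖((f - trunc f n : lp (fun _ : ℕ => ℝ) r) : ∀ _ : ℕ, ℝ) i‖ ^ r.toReal
      = if i < n then 0 else g i := by
    intro i
    rw [sub_trunc_apply]
    by_cases h : i < n <;> simp [h, Real.zero_rpow hr.ne', hgdef]
  calc ∑' i, ‖((f - trunc f n : lp (fun _ : ℕ => ℝ) r) : ∀ _ : ℕ, ℝ) i‖ ^ r.toReal
      = ∑' i, (if i < n then 0 else g i) := by congr 1; funext i; exact hcoe i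
    _ ≤ (ε / 2) ^ r.toReal := by
        have := hadd
        rw [hhead] at this
        linarith [hn2]

lemma pointwise_disj {s : Finset ℕ} (v : ℕ → ℝ) {rr : ℝ} (hrr : rr ≠ 0)
    (h : ∀ j ∈ s, ∀ k ∈ s, j ≠ k → v j = 0 ∨ v k = 0) :
    ‖∑ j ∈ s, v j‖ ^ rr = ∑ j ∈ s, ‖v j‖ ^ rr := by
  by_cases hall : ∀ j ∈ s, v j = 0
  · rw [Finset.sum_eq_zero hall, Finset.sum_eq_zero]
    · simp [Real.zero_rpow hrr]
    · intro j hj; simp [hall j hj, Real.zero_rpow hrr]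
  · push_neg at hall
    obtain ⟨k₀, hk₀, hk₀ne⟩ := hall
    have hz : ∀ j ∈ s, j ≠ k₀ → v j = 0 := by
      intro j hj hne
      rcases h j hj k₀ hk₀ hne with h1 | h1
      · exact h1
      · exact absurd h1 hk₀ne
    rw [Finset.sum_eq_single_of_mem k₀ hk₀ hz,
        Finset.sum_eq_single_of_mem k₀ hk₀ (fun j hj hne => by
          simp [hz j hj hne, Real.zero_rpow hrr])]

/-- Norm-additivity over disjointly supported vectors. -/
lemma norm_sum_disj (hr : 0 < r.toReal) {s : Finset ℕ} (g : ℕ → lp (fun _ : ℕ => ℝ) r)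
    (h : ∀ j ∈ s, ∀ k ∈ s, j ≠ k → ∀ i, (g j : ∀ _ : ℕ, ℝ) i = 0 ∨ (g k : ∀ _ : ℕ, ℝ) i = 0) :
    ‖∑ j ∈ s, g j‖ ^ r.toReal = ∑ j ∈ s, ‖g j‖ ^ r.toReal := by
  rw [lp.norm_rpow_eq_tsum hr]
  have hcoe : ∀ i, ((∑ j ∈ s, g j : lp (fun _ : ℕ => ℝ) r) : ∀ _ : ℕ, ℝ) i
      = ∑ j ∈ s, (g j : ∀ _ : ℕ, ℝ) i := by
    intro i
    rw [lp.coeFn_sum]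
    simp
  calc ∑' i, ‖((∑ j ∈ s, g j : lp (fun _ : ℕ => ℝ) r) : ∀ _ : ℕ, ℝ) i‖ ^ r.toReal
      = ∑' i, ∑ j ∈ s, ‖(g j : ∀ _ : ℕ, ℝ) i‖ ^ r.toReal := by
        congr 1; funext i
        rw [hcoe i, pointwise_disj _ hr.ne' (fun j hj k hk hne => h j hj k hk hne i)]
    _ = ∑ j ∈ s, ∑' i, ‖(g j : ∀ _ : ℕ, ℝ) i‖ ^ r.toReal := by
        rw [Summable.tsum_finsetSum]
        intro j _
        exact (lp.memℓp (g j)).summable hr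
    _ = ∑ j ∈ s, ‖g j‖ ^ r.toReal := by
        refine Finset.sum_congr rfl fun j _ => ?_
        rw [lp.norm_rpow_eq_tsum hr]

/-- Coordinate evaluation as a linear map on `lp`. -/
noncomputable def evalL (r : ℝ≥0∞) (i : ℕ) : lp (fun _ : ℕ => ℝ) r →ₗ[ℝ] ℝ where
  toFun f := (f : ∀ _ : ℕ, ℝ) i
  map_add' f g := by
    simp only []
    rw [show ((f + g : lp (fun _ : ℕ => ℝ) r) : ∀ _ : ℕ, ℝ) i
      = (f : ∀ _ : ℕ, ℝ) i + (g : ∀ _ : ℕ, ℝ) i from congrFun (lp.coeFn_add f g) i]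
  map_smul' c f := by
    simp only []
    rw [show ((c • f : lp (fun _ : ℕ => ℝ) r) : ∀ _ : ℕ, ℝ) i
      = c • (f : ∀ _ : ℕ, ℝ) i from congrFun (lp.coeFn_smul c f) i]
    rfl

lemma exists_unit {p q : ℝ≥0∞} [Fact (1 ≤ p)] [Fact (1 ≤ q)]
    (A : lp (fun _ : ℕ => ℝ) p →L[ℝ] lp (fun _ : ℕ => ℝ) q)
    (M : Submodule ℝ (lp (fun _ : ℕ => ℝ) p)) (hM : ¬ FiniteDimensional ℝ M) (L K : ℕ) :
    ∃ z : lp (fun _ : ℕ => ℝ) p, z ∈ M ∧ ‖z‖ = 1 ∧ (∀ i, i < L → (z : ∀ _ : ℕ, ℝ) i = 0) ∧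
      (∀ i, i < K → ((A z : lp (fun _ : ℕ => ℝ) q) : ∀ _ : ℕ, ℝ) i = 0) := by
  set φ : M →ₗ[ℝ] (Fin L → ℝ) × (Fin K → ℝ) :=
    { toFun := fun x => (fun j => evalL p j.1 (x : lp (fun _ : ℕ => ℝ) p),
        fun j => evalL q j.1 (A (x : lp (fun _ : ℕ => ℝ) p)))
      map_add' := fun x y => by
        ext j <;> simp [map_add]
      map_smul' := fun c x => by
        ext j <;> simp [map_smul] } with hφ
  have hker : LinearMap.ker φ ≠ ⊥ := by
    intro h
    exact hM (FiniteDimensional.of_injective φ (LinearMap.ker_eq_bot.1 h))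
  obtain ⟨x, hx, hxne⟩ := (Submodule.ne_bot_iff _).1 hker
  have hφx : φ x = 0 := hx
  have hxlp : (x : lp (fun _ : ℕ => ℝ) p) ≠ 0 := by
    simpa [Submodule.coe_eq_zero] using hxne
  have hnx : ‖(x : lp (fun _ : ℕ => ℝ) p)‖ ≠ 0 := norm_ne_zero_iff.2 hxlp
  refine ⟨‖(x : lp (fun _ : ℕ => ℝ) p)‖⁻¹ • (x : lp (fun _ : ℕ => ℝ) p),
    M.smul_mem _ x.2, ?_, ?_, ?_⟩
  · rw [norm_smul, norm_inv, norm_norm, inv_mul_cancel₀ hnx]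
  · intro i hi
    have h1 : evalL p i (x : lp (fun _ : ℕ => ℝ) p) = 0 := by
      have := congrArg (fun v => v.1 ⟨i, hi⟩) hφx
      simpa [hφ] using this
    rw [lp.coeFn_smul]
    simpa [evalL] using Or.inr h1
  · intro i hi
    have h1 : evalL q i (A (x : lp (fun _ : ℕ => ℝ) p)) = 0 := by
      have := congrArg (fun v => v.2 ⟨i, hi⟩) hφx
      simpa [hφ] using this
    rw [map_smul, lp.coeFn_smul]
    simpa [evalL] using Or.inr h1

lemma rpow_le_of_rpow_le {x y rr : ℝ} (hrr : 0 < rr) (hy : 0 ≤ y) (hx : 0 ≤ x)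
    (h : x ^ rr ≤ y ^ rr) : x ≤ y := by
  by_contra hcon
  push_neg at hcon
  exact absurd h (not_le.2 (Real.rpow_lt_rpow hy hcon hrr))

lemma no_growth {a b C1 C2 C3 : ℝ} (hab : b < a) (hb : 0 ≤ b) (hC1 : 0 < C1) (hC3 : 0 ≤ C3)
    (h : ∀ N : ℕ, 1 ≤ N → C1 * (N : ℝ) ^ a ≤ C2 * (N : ℝ) ^ b + C3) : False := by
  have hten : Tendsto (fun n : ℕ => C1 * (n : ℝ) ^ (a - b)) atTop atTop :=
    (((tendsto_rpow_atTop (sub_pos.2 hab)).const_mul_atTop hC1).comp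
      tendsto_natCast_atTop_atTop)
  obtain ⟨N, hN1, hN2⟩ := ((hten.eventually_gt_atTop (C2 + C3)).and (eventually_ge_atTop 1)).exists
  have hNr : (1 : ℝ) ≤ (N : ℝ) := Nat.one_le_cast.2 hN2
  have hNpos : (0 : ℝ) < (N : ℝ) := by linarith
  have hNb : (1 : ℝ) ≤ (N : ℝ) ^ b := Real.one_le_rpow hNr hb
  have key : (N : ℝ) ^ a = (N : ℝ) ^ (a - b) * (N : ℝ) ^ b := by
    rw [← Real.rpow_add hNpos]; ring_nf
  have h5 : C1 * (N : ℝ) ^ a = (C1 * (N : ℝ) ^ (a - b)) * (N : ℝ) ^ b := by rw [key]; ring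
  have h6 : (C2 + C3) * (N : ℝ) ^ b < (C1 * (N : ℝ) ^ (a - b)) * (N : ℝ) ^ b :=
    mul_lt_mul_of_pos_right hN1 (by linarith)
  have h7 : C2 * (N : ℝ) ^ b + C3 ≤ (C2 + C3) * (N : ℝ) ^ b := by nlinarith
  have := h N hN2
  linarith

lemma geom_bound : ∀ N : ℕ, ∑ k ∈ Finset.range N, ((2 : ℝ)⁻¹) ^ (k + 1) ≤ 1 := by
  have key : ∀ N : ℕ, ∑ k ∈ Finset.range N, ((2 : ℝ)⁻¹) ^ (k + 1) = 1 - (2 : ℝ)⁻¹ ^ N := by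
    intro N
    induction N with
    | zero => simp
    | succ n ih => rw [Finset.sum_range_succ, ih, pow_succ]; ring
  intro N
  rw [key]
  have : (0 : ℝ) ≤ (2 : ℝ)⁻¹ ^ N := by positivity
  linarith

end PittAux

open PittAux in
set_option maxHeartbeats 2000000 in
/-- Every bounded linear operator `ℓ^p → ℓ^q` with `p, q ∈ [1, ∞)` and `p ≠ q` is strictly
singular. -/
theorem stmt_4
    (p q : ℝ≥0∞) [Fact (1 ≤ p)] [Fact (1 ≤ q)]
    (hp : p ≠ ⊤) (hq : q ≠ ⊤) (hpq : p ≠ q)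
    (A : lp (fun _ : ℕ => ℝ) p →L[ℝ] lp (fun _ : ℕ => ℝ) q) :
    ∀ M : Submodule ℝ (lp (fun _ : ℕ => ℝ) p),
      (∃ c > 0, ∀ x ∈ M, c * ‖x‖ ≤ ‖A x‖) → FiniteDimensional ℝ M := by
  intro M hM
  obtain ⟨c, hc, hbound⟩ := hM
  by_contra hMfd
  have hp1 : (1 : ℝ≥0∞) ≤ p := Fact.out
  have hq1 : (1 : ℝ≥0∞) ≤ q := Fact.out
  have hpr : 0 < p.toReal := ENNReal.toReal_pos (zero_lt_one.trans_le hp1).ne' hp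
  have hqr : 0 < q.toReal := ENNReal.toReal_pos (zero_lt_one.trans_le hq1).ne' hq
  have hprqr : p.toReal ≠ q.toReal := fun h => hpq ((ENNReal.toReal_eq_toReal_iff' hp hq).1 h)
  set δ : ℝ := min c 1 / 4 with hδdef
  have hδpos : 0 < δ := by
    have : 0 < min c 1 := lt_min hc one_pos
    positivity
  have hδc : δ ≤ c / 4 := by
    have : min c 1 ≤ c := min_le_left _ _
    rw [hδdef]; linarith
  have hδ1 : δ ≤ 1 / 4 := by
    have : min c 1 ≤ 1 := min_le_right _ _
    rw [hδdef]; linarith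
  -- the recursive construction step
  have step : ∀ (k : ℕ) (LK : ℕ × ℕ), ∃ t : (lp (fun _ : ℕ => ℝ) p) × ℕ × ℕ,
      t.1 ∈ M ∧ ‖t.1‖ = 1 ∧ (∀ i, i < LK.1 → (t.1 : ∀ _ : ℕ, ℝ) i = 0) ∧
      (∀ i, i < LK.2 → ((A t.1 : lp (fun _ : ℕ => ℝ) q) : ∀ _ : ℕ, ℝ) i = 0) ∧
      LK.1 < t.2.1 ∧ LK.2 < t.2.2 ∧
      ‖t.1 - trunc t.1 t.2.1‖ ≤ δ * (2 : ℝ)⁻¹ ^ (k + 1) ∧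
      ‖A t.1 - trunc (A t.1) t.2.2‖ ≤ δ * (2 : ℝ)⁻¹ ^ (k + 1) := by
    intro k LK
    have hεk : 0 < δ * (2 : ℝ)⁻¹ ^ (k + 1) := by positivity
    obtain ⟨z, hzM, hz1, hzL, hzK⟩ := exists_unit A M hMfd LK.1 LK.2
    obtain ⟨L', hL'1, hL'2⟩ := tail_small hpr z hεk LK.1
    obtain ⟨K', hK'1, hK'2⟩ := tail_small hqr (A z) hεk LK.2
    exact ⟨(z, L', K'), hzM, hz1, hzL, hzK, hL'1, hK'1, hL'2.le, hK'2.le⟩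
  choose F hF using step
  let st : ℕ → ℕ × ℕ := fun k => Nat.rec ((0, 0) : ℕ × ℕ) (fun k ih => (F k ih).2) k
  let z : ℕ → lp (fun _ : ℕ => ℝ) p := fun k => (F k (st k)).1
  let L : ℕ → ℕ := fun k => (st k).1
  let K : ℕ → ℕ := fun k => (st k).2
  have hstsucc : ∀ k, st (k + 1) = (F k (st k)).2 := fun k => rfl
  have hzM : ∀ k, z k ∈ M := fun k => (hF k (st k)).1
  have hz1 : ∀ k, ‖z k‖ = 1 := fun k => (hF k (st k)).2.1
  have hzL : ∀ k, ∀ i, i < L k → (z k : ∀ _ : ℕ, ℝ) i = 0 := fun k => (hF k (st k)).2.2.1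
  have hL : ∀ k, L k < L (k + 1) := fun k => (hF k (st k)).2.2.2.2.1
  have hK : ∀ k, K k < K (k + 1) := fun k => (hF k (st k)).2.2.2.2.2.1
  have hztail : ∀ k, ‖z k - trunc (z k) (L (k + 1))‖ ≤ δ * (2 : ℝ)⁻¹ ^ (k + 1) :=
    fun k => (hF k (st k)).2.2.2.2.2.2.1
  have hAzK : ∀ k, ∀ i, i < K k → ((A (z k) : lp (fun _ : ℕ => ℝ) q) : ∀ _ : ℕ, ℝ) i = 0 :=
    fun k => (hF k (st k)).2.2.2.1
  have hAtail : ∀ k, ‖A (z k) - trunc (A (z k)) (K (k + 1))‖ ≤ δ * (2 : ℝ)⁻¹ ^ (k + 1) :=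
    fun k => (hF k (st k)).2.2.2.2.2.2.2
  have hLmono : Monotone L := (strictMono_nat_of_lt_succ hL).monotone
  have hKmono : Monotone K := (strictMono_nat_of_lt_succ hK).monotone
  set v : ℕ → lp (fun _ : ℕ => ℝ) p := fun k => trunc (z k) (L (k + 1)) with hvdef
  set w : ℕ → lp (fun _ : ℕ => ℝ) q := fun k => trunc (A (z k)) (K (k + 1)) with hwdef
  have hδk : ∀ k, δ * (2 : ℝ)⁻¹ ^ (k + 1) ≤ δ := by
    intro k
    have : ((2 : ℝ)⁻¹) ^ (k + 1) ≤ 1 := pow_le_one₀ (by norm_num) (by norm_num)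
    nlinarith
  have hzv : ∀ k, ‖z k - v k‖ ≤ δ := fun k => (hztail k).trans (hδk k)
  have hAw : ∀ k, ‖A (z k) - w k‖ ≤ δ := fun k => (hAtail k).trans (hδk k)
  have hAzlb : ∀ k, c ≤ ‖A (z k)‖ := by
    intro k
    have := hbound (z k) (hzM k)
    rwa [hz1 k, mul_one] at this
  have hAzub : ∀ k, ‖A (z k)‖ ≤ ‖A‖ := by
    intro k
    have := A.le_opNorm (z k)
    rwa [hz1 k, mul_one] at this
  have hv_ub : ∀ k, ‖v k‖ ≤ 2 := by
    intro k
    have h1 : ‖v k‖ ≤ ‖z k‖ + ‖z k - v k‖ := by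
      have := norm_sub_le (z k) (z k - v k)
      rwa [sub_sub_cancel] at this
    have := hzv k
    rw [hz1 k] at h1
    linarith [hδ1]
  have hv_lb : ∀ k, (1 : ℝ) / 2 ≤ ‖v k‖ := by
    intro k
    have h1 : ‖z k‖ - ‖v k‖ ≤ ‖z k - v k‖ := norm_sub_norm_le _ _
    rw [hz1 k] at h1
    linarith [hzv k, hδ1]
  have hw_ub : ∀ k, ‖w k‖ ≤ ‖A‖ + 1 := by
    intro k
    have h1 : ‖w k‖ ≤ ‖A (z k)‖ + ‖A (z k) - w k‖ := by
      have := norm_sub_le (A (z k)) (A (z k) - w k)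
      rwa [sub_sub_cancel] at this
    linarith [hAw k, hAzub k, hδ1]
  have hw_lb : ∀ k, c / 2 ≤ ‖w k‖ := by
    intro k
    have h1 : ‖A (z k)‖ - ‖w k‖ ≤ ‖A (z k) - w k‖ := norm_sub_norm_le _ _
    linarith [hAw k, hAzlb k, hδc]
  -- support facts
  have hv_supp_lo : ∀ k i, i < L k → (v k : ∀ _ : ℕ, ℝ) i = 0 := by
    intro k i hi
    rw [hvdef]
    simp only [trunc_apply]
    by_cases h2 : i < L (k + 1)
    · rw [if_pos h2]; exact hzL k i hi
    · rw [if_neg h2]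
  have hv_supp_hi : ∀ k i, L (k + 1) ≤ i → (v k : ∀ _ : ℕ, ℝ) i = 0 := by
    intro k i hi
    rw [hvdef]
    simp only [trunc_apply]
    rw [if_neg (not_lt.2 hi)]
  have hw_supp_lo : ∀ k i, i < K k → (w k : ∀ _ : ℕ, ℝ) i = 0 := by
    intro k i hi
    rw [hwdef]
    simp only [trunc_apply]
    by_cases h2 : i < K (k + 1)
    · rw [if_pos h2]; exact hAzK k i hi
    · rw [if_neg h2]
  have hw_supp_hi : ∀ k i, K (k + 1) ≤ i → (w k : ∀ _ : ℕ, ℝ) i = 0 := by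
    intro k i hi
    rw [hwdef]
    simp only [trunc_apply]
    rw [if_neg (not_lt.2 hi)]
  have hvdisj : ∀ j k, j ≠ k → ∀ i, (v j : ∀ _ : ℕ, ℝ) i = 0 ∨ (v k : ∀ _ : ℕ, ℝ) i = 0 := by
    have key : ∀ j k, j < k → ∀ i, (v j : ∀ _ : ℕ, ℝ) i = 0 ∨ (v k : ∀ _ : ℕ, ℝ) i = 0 := by
      intro j k hjk i
      by_cases hi : i < L (j + 1)
      · exact Or.inr (hv_supp_lo k i (lt_of_lt_of_le hi (hLmono hjk)))
      · exact Or.inl (hv_supp_hi j i (not_lt.1 hi))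
    intro j k hjk i
    rcases hjk.lt_or_gt with h | h
    · exact key j k h i
    · exact (key k j h i).symm
  have hwdisj : ∀ j k, j ≠ k → ∀ i, (w j : ∀ _ : ℕ, ℝ) i = 0 ∨ (w k : ∀ _ : ℕ, ℝ) i = 0 := by
    have key : ∀ j k, j < k → ∀ i, (w j : ∀ _ : ℕ, ℝ) i = 0 ∨ (w k : ∀ _ : ℕ, ℝ) i = 0 := by
      intro j k hjk i
      by_cases hi : i < K (j + 1)
      · exact Or.inr (hw_supp_lo k i (lt_of_lt_of_le hi (hKmono hjk)))
      · exact Or.inl (hw_supp_hi j i (not_lt.1 hi))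
    intro j k hjk i
    rcases hjk.lt_or_gt with h | h
    · exact key j k h i
    · exact (key k j h i).symm
  -- per-N estimates
  have main1 : ∀ N : ℕ, 1 ≤ N →
      (c / 2) * (N : ℝ) ^ (p.toReal)⁻¹ ≤ (‖A‖ + 1) * (N : ℝ) ^ (q.toReal)⁻¹ + (1 + c) ∧
      (c / 2) * (N : ℝ) ^ (q.toReal)⁻¹ ≤ (2 * ‖A‖) * (N : ℝ) ^ (p.toReal)⁻¹ + (‖A‖ + 1) := by
    intro N hN
    have hNnn : (0 : ℝ) ≤ (N : ℝ) := Nat.cast_nonneg N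
    set s : Finset ℕ := Finset.range N with hsdef
    set S : lp (fun _ : ℕ => ℝ) p := ∑ k ∈ s, z k with hSdef
    set V : lp (fun _ : ℕ => ℝ) p := ∑ k ∈ s, v k with hVdef
    set W : lp (fun _ : ℕ => ℝ) q := ∑ k ∈ s, w k with hWdef
    have hSM : S ∈ M := Submodule.sum_mem M (fun k _ => hzM k)
    have herr : ∑ k ∈ s, (δ * (2 : ℝ)⁻¹ ^ (k + 1)) ≤ 1 := by
      rw [← Finset.mul_sum]
      have := geom_bound N
      nlinarith [hδ1]
    have hSV : ‖S - V‖ ≤ 1 := by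
      rw [hSdef, hVdef, ← Finset.sum_sub_distrib]
      refine le_trans (norm_sum_le _ _) (le_trans (Finset.sum_le_sum fun k _ => hztail k) herr)
    have hASW : ‖A S - W‖ ≤ 1 := by
      rw [hSdef, hWdef, map_sum, ← Finset.sum_sub_distrib]
      refine le_trans (norm_sum_le _ _) (le_trans (Finset.sum_le_sum fun k _ => hAtail k) herr)
    -- bounds for V
    have hVp : ‖V‖ ^ p.toReal = ∑ k ∈ s, ‖v k‖ ^ p.toReal :=
      norm_sum_disj hpr v (fun j _ k _ hjk => hvdisj j k hjk)
    have hWq : ‖W‖ ^ q.toReal = ∑ k ∈ s, ‖w k‖ ^ q.toReal :=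
      norm_sum_disj hqr w (fun j _ k _ hjk => hwdisj j k hjk)
    have hNpowp : ((N : ℝ) ^ (p.toReal)⁻¹) ^ p.toReal = (N : ℝ) :=
      Real.rpow_inv_rpow hNnn hpr.ne'
    have hNpowq : ((N : ℝ) ^ (q.toReal)⁻¹) ^ q.toReal = (N : ℝ) :=
      Real.rpow_inv_rpow hNnn hqr.ne'
    have hNp_nn : (0 : ℝ) ≤ (N : ℝ) ^ (p.toReal)⁻¹ := Real.rpow_nonneg hNnn _
    have hNq_nn : (0 : ℝ) ≤ (N : ℝ) ^ (q.toReal)⁻¹ := Real.rpow_nonneg hNnn _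
    have hVub : ‖V‖ ≤ 2 * (N : ℝ) ^ (p.toReal)⁻¹ := by
      refine rpow_le_of_rpow_le hpr (by positivity) (norm_nonneg _) ?_
      rw [hVp, Real.mul_rpow (by norm_num) hNp_nn, hNpowp]
      calc ∑ k ∈ s, ‖v k‖ ^ p.toReal ≤ ∑ k ∈ s, (2 : ℝ) ^ p.toReal :=
            Finset.sum_le_sum fun k _ => Real.rpow_le_rpow (norm_nonneg _) (hv_ub k) hpr.le
        _ = N * (2 : ℝ) ^ p.toReal := by
            rw [Finset.sum_const, hsdef, Finset.card_range, nsmul_eq_mul]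
        _ = (2 : ℝ) ^ p.toReal * N := by ring
    have hVlb : (1 / 2 : ℝ) * (N : ℝ) ^ (p.toReal)⁻¹ ≤ ‖V‖ := by
      refine rpow_le_of_rpow_le hpr (norm_nonneg _) (by positivity) ?_
      rw [Real.mul_rpow (by norm_num) hNp_nn, hNpowp, hVp]
      calc (1 / 2 : ℝ) ^ p.toReal * N = ∑ _k ∈ s, (1 / 2 : ℝ) ^ p.toReal := by
            rw [Finset.sum_const, hsdef, Finset.card_range, nsmul_eq_mul]; ring
        _ ≤ ∑ k ∈ s, ‖v k‖ ^ p.toReal :=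
            Finset.sum_le_sum fun k _ => Real.rpow_le_rpow (by norm_num) (hv_lb k) hpr.le
    have hWub : ‖W‖ ≤ (‖A‖ + 1) * (N : ℝ) ^ (q.toReal)⁻¹ := by
      have hA1 : (0 : ℝ) ≤ ‖A‖ + 1 := by positivity
      refine rpow_le_of_rpow_le hqr (by positivity) (norm_nonneg _) ?_
      rw [hWq, Real.mul_rpow hA1 hNq_nn, hNpowq]
      calc ∑ k ∈ s, ‖w k‖ ^ q.toReal ≤ ∑ k ∈ s, (‖A‖ + 1) ^ q.toReal :=
            Finset.sum_le_sum fun k _ => Real.rpow_le_rpow (norm_nonneg _) (hw_ub k) hqr.le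
        _ = N * (‖A‖ + 1) ^ q.toReal := by
            rw [Finset.sum_const, hsdef, Finset.card_range, nsmul_eq_mul]
        _ = (‖A‖ + 1) ^ q.toReal * N := by ring
    have hWlb : (c / 2 : ℝ) * (N : ℝ) ^ (q.toReal)⁻¹ ≤ ‖W‖ := by
      have hc2 : (0 : ℝ) ≤ c / 2 := by linarith
      refine rpow_le_of_rpow_le hqr (norm_nonneg _) (by positivity) ?_
      rw [Real.mul_rpow hc2 hNq_nn, hNpowq, hWq]
      calc (c / 2 : ℝ) ^ q.toReal * N = ∑ _k ∈ s, (c / 2 : ℝ) ^ q.toReal := by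
            rw [Finset.sum_const, hsdef, Finset.card_range, nsmul_eq_mul]; ring
        _ ≤ ∑ k ∈ s, ‖w k‖ ^ q.toReal :=
            Finset.sum_le_sum fun k _ => Real.rpow_le_rpow hc2 (hw_lb k) hqr.le
    -- combine
    have hSlb : ‖V‖ - 1 ≤ ‖S‖ := by
      have := norm_sub_norm_le V S
      have h2 : ‖V - S‖ = ‖S - V‖ := norm_sub_rev _ _
      linarith [hSV, this, h2.le, h2.ge]
    have hSub : ‖S‖ ≤ ‖V‖ + 1 := by
      have h1 : ‖S‖ - ‖V‖ ≤ ‖S - V‖ := norm_sub_norm_le _ _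
      linarith
    have hASlb : ‖W‖ - 1 ≤ ‖A S‖ := by
      have h1 : ‖W‖ - ‖A S‖ ≤ ‖W - A S‖ := norm_sub_norm_le _ _
      have h2 : ‖W - A S‖ = ‖A S - W‖ := norm_sub_rev _ _
      linarith
    have hASub : ‖A S‖ ≤ ‖W‖ + 1 := by
      have h1 : ‖A S‖ - ‖W‖ ≤ ‖A S - W‖ := norm_sub_norm_le _ _
      linarith
    have hlower : c * ‖S‖ ≤ ‖A S‖ := hbound S hSM
    have hupper : ‖A S‖ ≤ ‖A‖ * ‖S‖ := A.le_opNorm S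
    have hAnn : (0 : ℝ) ≤ ‖A‖ := norm_nonneg _
    constructor
    · -- c‖S‖ ≤ ‖A S‖ ≤ ‖W‖+1 ≤ (‖A‖+1) N^{1/q} + 1 and ‖S‖ ≥ (1/2)N^{1/p} - 1
      have h1 : c * ((1 / 2 : ℝ) * (N : ℝ) ^ (p.toReal)⁻¹ - 1) ≤ c * ‖S‖ := by
        have : (1 / 2 : ℝ) * (N : ℝ) ^ (p.toReal)⁻¹ - 1 ≤ ‖S‖ := by linarith
        nlinarith
      nlinarith
    · -- (c/2)N^{1/q} - 1 ≤ ‖W‖ - 1 ≤ ‖A S‖ ≤ ‖A‖‖S‖ ≤ ‖A‖(2N^{1/p}+1)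
      have h2 : ‖A‖ * ‖S‖ ≤ ‖A‖ * (2 * (N : ℝ) ^ (p.toReal)⁻¹ + 1) := by
        have : ‖S‖ ≤ 2 * (N : ℝ) ^ (p.toReal)⁻¹ + 1 := by linarith
        nlinarith
      nlinarith
  -- final contradiction
  rcases hprqr.lt_or_gt with h | h
  · -- p.toReal < q.toReal, so (q.toReal)⁻¹ < (p.toReal)⁻¹
    have hinv : (q.toReal)⁻¹ < (p.toReal)⁻¹ := by
      exact inv_strictAnti₀ hpr h
    exact no_growth hinv (by positivity) (by linarith : (0:ℝ) < c / 2) (by linarith : (0:ℝ) ≤ 1 + c)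
      (fun N hN => (main1 N hN).1)
  · -- q.toReal < p.toReal
    have hinv : (p.toReal)⁻¹ < (q.toReal)⁻¹ := by
      exact inv_strictAnti₀ hqr h
    exact no_growth hinv (by positivity) (by linarith : (0:ℝ) < c / 2)
      (by positivity : (0:ℝ) ≤ ‖A‖ + 1) (fun N hN => (main1 N hN).2)
end

section
/- For 1 ≤ p < q < ∞, the natural inclusion map ι : ℓ^p → ℓ^q, which sends a sequence in ℓ^p to the same sequence regarded as an element of ℓ^q, is a well-defined injective bounded linear operator that is strictly singular but not compact. -/
open scoped ENNReal

set_option linter.unusedSectionVars false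
set_option linter.unusedVariables false

noncomputable section StrictSingularHelpers

theorem tsum_rpow_le (pr qr : ℝ) (hpr : 0 < pr) (hpq : pr ≤ qr) (f : ℕ → ℝ)
    (hf : Summable fun k => ‖f k‖ ^ pr) :
    Summable (fun k => ‖f k‖ ^ qr) ∧
      (∑' k, ‖f k‖ ^ qr) ^ (1/qr) ≤ (∑' k, ‖f k‖ ^ pr) ^ (1/pr) := by
  have hqr : 0 < qr := lt_of_lt_of_le hpr hpq
  have htn : 0 ≤ ∑' k, ‖f k‖ ^ pr := tsum_nonneg fun k => Real.rpow_nonneg (norm_nonneg _) _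
  set A : ℝ := (∑' k, ‖f k‖ ^ pr) ^ (1/pr) with hA
  have hAnn : 0 ≤ A := Real.rpow_nonneg htn _
  have hApr : A ^ pr = ∑' k, ‖f k‖ ^ pr := by
    rw [hA, ← Real.rpow_mul htn, one_div_mul_cancel hpr.ne', Real.rpow_one]
  have hbd : ∀ k, ‖f k‖ ≤ A := by
    intro k
    have h1 : ‖f k‖ ^ pr ≤ ∑' k, ‖f k‖ ^ pr :=
      Summable.le_tsum hf k fun j _ => Real.rpow_nonneg (norm_nonneg _) _
    calc ‖f k‖ = (‖f k‖ ^ pr) ^ (1/pr) := by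
          rw [← Real.rpow_mul (norm_nonneg _), mul_one_div_cancel hpr.ne', Real.rpow_one]
      _ ≤ A := Real.rpow_le_rpow (Real.rpow_nonneg (norm_nonneg _) _) h1 (by positivity)
  have hterm : ∀ k, ‖f k‖ ^ qr ≤ A ^ (qr - pr) * ‖f k‖ ^ pr := by
    intro k
    calc ‖f k‖ ^ qr = ‖f k‖ ^ (qr - pr) * ‖f k‖ ^ pr := by
          rw [← Real.rpow_add' (norm_nonneg _)] <;> [ring_nf; simp [hqr.ne']]
      _ ≤ A ^ (qr - pr) * ‖f k‖ ^ pr := by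
          have : ‖f k‖ ^ (qr - pr) ≤ A ^ (qr - pr) :=
            Real.rpow_le_rpow (norm_nonneg _) (hbd k) (sub_nonneg.2 hpq)
          exact mul_le_mul_of_nonneg_right this (Real.rpow_nonneg (norm_nonneg _) _)
  have hsummable : Summable fun k => ‖f k‖ ^ qr :=
    Summable.of_nonneg_of_le (fun k => Real.rpow_nonneg (norm_nonneg _) _) hterm (hf.mul_left _)
  refine ⟨hsummable, ?_⟩
  have h2 : (∑' k, ‖f k‖ ^ qr) ≤ A ^ qr := by
    calc (∑' k, ‖f k‖ ^ qr) ≤ ∑' k, A ^ (qr - pr) * ‖f k‖ ^ pr :=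
          Summable.tsum_le_tsum hterm hsummable (hf.mul_left _)
      _ = A ^ (qr - pr) * ∑' k, ‖f k‖ ^ pr := tsum_mul_left
      _ = A ^ (qr - pr) * A ^ pr := by rw [hApr]
      _ = A ^ qr := by rw [← Real.rpow_add' hAnn] <;> [ring_nf; simp [hqr.ne']]
  calc (∑' k, ‖f k‖ ^ qr) ^ (1/qr) ≤ (A ^ qr) ^ (1/qr) :=
        Real.rpow_le_rpow (tsum_nonneg fun k => Real.rpow_nonneg (norm_nonneg _) _) h2 (by positivity)
    _ = A := by rw [← Real.rpow_mul hAnn, mul_one_div_cancel hqr.ne', Real.rpow_one]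

theorem rpow_self_inv {a : ℝ} (r : ℝ) (ha : 0 ≤ a) (hr : r ≠ 0) : (a ^ r) ^ (1/r) = a := by
  rw [← Real.rpow_mul ha, mul_one_div_cancel hr, Real.rpow_one]

variable {r : ℝ≥0∞} [Fact (1 ≤ r)]

/-- truncation of `f` to a finite set `s` of coordinates -/
def hdS (s : Finset ℕ) (f : lp (fun _ : ℕ => ℝ) r) : lp (fun _ : ℕ => ℝ) r :=
  ∑ k ∈ s, lp.single r k ((f : ∀ _ : ℕ, ℝ) k)

theorem hdS_apply (s : Finset ℕ) (f : lp (fun _ : ℕ => ℝ) r) (k : ℕ) :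
    (hdS s f : ∀ _ : ℕ, ℝ) k = if k ∈ s then (f : ∀ _ : ℕ, ℝ) k else 0 := by
  rw [hdS, lp.coeFn_sum]
  simp only [Finset.sum_apply, lp.single_apply, Finset.sum_dite_eq, Pi.single_apply, Finset.sum_ite_eq]

theorem hdS_sum (s : Finset ℕ) (n : ℕ) (x : ℕ → lp (fun _ : ℕ => ℝ) r) :
    hdS s (∑ j ∈ Finset.range n, x j) = ∑ j ∈ Finset.range n, hdS s (x j) := by
  ext k
  rw [hdS_apply, lp.coeFn_sum, lp.coeFn_sum, Finset.sum_apply, Finset.sum_apply]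
  by_cases h : k ∈ s
  · simp only [if_pos h, lp.coeFn_sum, Finset.sum_apply]
    exact Finset.sum_congr rfl fun j _ => by rw [hdS_apply, if_pos h]
  · simp only [if_neg h]
    refine (Finset.sum_eq_zero fun j _ => ?_).symm
    rw [hdS_apply, if_neg h]

theorem hdS_eq_zero (s : Finset ℕ) (f : lp (fun _ : ℕ => ℝ) r)
    (h : ∀ k ∈ s, (f : ∀ _ : ℕ, ℝ) k = 0) : hdS s f = 0 := by
  ext k
  rw [hdS_apply]
  by_cases hk : k ∈ s
  · simp [if_pos hk, h k hk]
  · simp [if_neg hk]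

theorem norm_hdS_rpow (hr : 0 < r.toReal) (s : Finset ℕ) (f : lp (fun _ : ℕ => ℝ) r) :
    ‖hdS s f‖ ^ r.toReal = ∑ k ∈ s, ‖(f : ∀ _ : ℕ, ℝ) k‖ ^ r.toReal :=
  lp.norm_sum_single hr (f : ∀ _ : ℕ, ℝ) s

theorem norm_hdS (hr : 0 < r.toReal) (s : Finset ℕ) (f : lp (fun _ : ℕ => ℝ) r) :
    ‖hdS s f‖ = (∑ k ∈ s, ‖(f : ∀ _ : ℕ, ℝ) k‖ ^ r.toReal) ^ (1 / r.toReal) := by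
  rw [← norm_hdS_rpow hr s f, ← Real.rpow_mul (norm_nonneg _),
    mul_one_div_cancel hr.ne', Real.rpow_one]

theorem norm_sub_hdS_rpow (hr : 0 < r.toReal) (s : Finset ℕ) (f : lp (fun _ : ℕ => ℝ) r) :
    ‖f - hdS s f‖ ^ r.toReal = ‖f‖ ^ r.toReal - ∑ k ∈ s, ‖(f : ∀ _ : ℕ, ℝ) k‖ ^ r.toReal := by
  have := lp.norm_sub_norm_compl_sub_single hr f s
  rw [← this]; ring_nf; rfl

variable (p : ℝ≥0∞) [Fact (1 ≤ p)]

/-- coordinate evaluation as a linear map -/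
def coordLM (k : ℕ) : lp (fun _ : ℕ => ℝ) p →ₗ[ℝ] ℝ where
  toFun f := (f : ∀ _ : ℕ, ℝ) k
  map_add' f g := rfl
  map_smul' c f := rfl

theorem exists_unit_vanish (M : Submodule ℝ (lp (fun _ : ℕ => ℝ) p))
    (hM : ¬ FiniteDimensional ℝ M) (N : ℕ) :
    ∃ x : lp (fun _ : ℕ => ℝ) p, x ∈ M ∧ ‖x‖ = 1 ∧ ∀ k < N, (x : ∀ _ : ℕ, ℝ) k = 0 := by
  set φ : lp (fun _ : ℕ => ℝ) p →ₗ[ℝ] (Fin N → ℝ) :=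
    LinearMap.pi (fun i : Fin N => coordLM p i) with hφ
  set ψ := φ.comp M.subtype with hψ
  have hninj : ¬ Function.Injective ψ := by
    intro hinj
    exact hM (FiniteDimensional.of_injective ψ hinj)
  rw [Function.not_injective_iff] at hninj
  obtain ⟨u, v, huv, hne⟩ := hninj
  set z : lp (fun _ : ℕ => ℝ) p := (u : lp (fun _ : ℕ => ℝ) p) - v with hz
  have hzM : z ∈ M := M.sub_mem u.2 v.2
  have hz0 : z ≠ 0 := by
    intro h
    exact hne (Subtype.ext (by rwa [sub_eq_zero] at h))
  have hzc : ∀ k < N, (z : ∀ _ : ℕ, ℝ) k = 0 := by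
    intro k hk
    have := congrFun huv ⟨k, hk⟩
    simp only [hψ, LinearMap.comp_apply, hφ, LinearMap.pi_apply] at this
    show (u : lp (fun _ : ℕ => ℝ) p) k - (v : lp (fun _ : ℕ => ℝ) p) k = 0
    rw [sub_eq_zero]
    exact this
  have hnz : ‖z‖ ≠ 0 := norm_ne_zero_iff.2 hz0
  refine ⟨‖z‖⁻¹ • z, M.smul_mem _ hzM, ?_, ?_⟩
  · rw [norm_smul, norm_inv, norm_norm, inv_mul_cancel₀ hnz]
  · intro k hk
    show ‖z‖⁻¹ • (z : ∀ _ : ℕ, ℝ) k = 0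
    rw [hzc k hk, smul_zero]

theorem exists_cutoff (hp : p ≠ ⊤) (x : lp (fun _ : ℕ => ℝ) p) (hx : ‖x‖ = 1)
    (ε : ℝ) (hε : 0 < ε) (N : ℕ) :
    ∃ N' : ℕ, N < N' ∧ 1 - ε ≤ ∑ k ∈ Finset.range N', ‖(x : ∀ _ : ℕ, ℝ) k‖ ^ p.toReal := by
  have hpr : 0 < p.toReal :=
    ENNReal.toReal_pos (lt_of_lt_of_le one_pos (Fact.out : 1 ≤ p)).ne' hp
  have hs := (lp.hasSum_norm hpr x).tendsto_sum_nat
  rw [hx, Real.one_rpow] at hs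
  have : ∀ᶠ m in Filter.atTop,
      1 - ε < ∑ k ∈ Finset.range m, ‖(x : ∀ _ : ℕ, ℝ) k‖ ^ p.toReal :=
    hs.eventually (eventually_gt_nhds (by linarith))
  obtain ⟨m, hm⟩ := (this.and (Filter.eventually_ge_atTop (N + 1))).exists
  exact ⟨m, lt_of_lt_of_le (Nat.lt_succ_self N) hm.2, hm.1.le⟩
section
variable (p q : ℝ≥0∞) [Fact (1 ≤ p)] [Fact (1 ≤ q)]

theorem hpr_pos (hpq : p ≠ ⊤) : 0 < p.toReal :=
  ENNReal.toReal_pos (lt_of_lt_of_le one_pos (Fact.out : 1 ≤ p)).ne' hpq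

theorem memq (hpq : p ≤ q) (f : lp (fun _ : ℕ => ℝ) p) : Memℓp (f : ∀ _ : ℕ, ℝ) q :=
  (lp.memℓp f).of_exponent_ge hpq

theorem normq_le (hq : q ≠ ⊤) (hpq : p ≤ q) (f : lp (fun _ : ℕ => ℝ) p) :
    ‖(⟨(f : ∀ _ : ℕ, ℝ), memq p q hpq f⟩ : lp (fun _ : ℕ => ℝ) q)‖ ≤ ‖f‖ := by
  have hpr : 0 < p.toReal := hpr_pos p (fun h => hq (top_le_iff.1 (h ▸ hpq)))
  have hqr : 0 < q.toReal := hpr_pos q hq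
  refine lp.norm_le_of_tsum_le hqr (norm_nonneg _) ?_
  have hsf : Summable fun k => ‖(f : ∀ _ : ℕ, ℝ) k‖ ^ p.toReal := (lp.memℓp f).summable hpr
  obtain ⟨hs, hle⟩ := tsum_rpow_le p.toReal q.toReal hpr (ENNReal.toReal_mono hq hpq)
    (f : ∀ _ : ℕ, ℝ) hsf
  have h1 : (∑' k, ‖(f : ∀ _ : ℕ, ℝ) k‖ ^ q.toReal) ^ (1/q.toReal) ≤ ‖f‖ := by
    rw [← lp.norm_eq_tsum_rpow hpr f] at hle
    exact hle
  calc (∑' k, ‖(f : ∀ _ : ℕ, ℝ) k‖ ^ q.toReal)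
      = (((∑' k, ‖(f : ∀ _ : ℕ, ℝ) k‖ ^ q.toReal) ^ (1/q.toReal)) : ℝ) ^ q.toReal := by
        rw [← Real.rpow_mul (tsum_nonneg fun k => Real.rpow_nonneg (norm_nonneg _) _),
          one_div_mul_cancel hqr.ne', Real.rpow_one]
    _ ≤ ‖f‖ ^ q.toReal :=
        Real.rpow_le_rpow (Real.rpow_nonneg (tsum_nonneg fun k => Real.rpow_nonneg (norm_nonneg _) _) _) h1 hqr.le

/-- the inclusion as a linear map -/
def inclLM (hpq : p ≤ q) : lp (fun _ : ℕ => ℝ) p →ₗ[ℝ] lp (fun _ : ℕ => ℝ) q where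
  toFun f := ⟨(f : ∀ _ : ℕ, ℝ), memq p q hpq f⟩
  map_add' f g := by ext; rfl
  map_smul' c f := by ext; rfl

/-- the inclusion as a continuous linear map -/
def inclCLM (hq : q ≠ ⊤) (hpq : p ≤ q) : lp (fun _ : ℕ => ℝ) p →L[ℝ] lp (fun _ : ℕ => ℝ) q :=
  LinearMap.mkContinuous (inclLM p q hpq) 1 (by
    intro f
    rw [one_mul]
    exact normq_le p q hq hpq f)

@[simp] theorem inclCLM_apply (hq : q ≠ ⊤) (hpq : p ≤ q) (f : lp (fun _ : ℕ => ℝ) p) (k : ℕ) :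
    (inclCLM p q hq hpq f : ∀ _ : ℕ, ℝ) k = (f : ∀ _ : ℕ, ℝ) k := rfl

theorem inclCLM_norm_le (hq : q ≠ ⊤) (hpq : p ≤ q) (f : lp (fun _ : ℕ => ℝ) p) :
    ‖inclCLM p q hq hpq f‖ ≤ ‖f‖ :=
  normq_le p q hq hpq f

theorem inclCLM_inj (hq : q ≠ ⊤) (hpq : p ≤ q) : Function.Injective (inclCLM p q hq hpq) := by
  intro f g h
  ext k
  exact congrFun (congrArg Subtype.val h) k
end
section
variable (p q : ℝ≥0∞) [Fact (1 ≤ p)] [Fact (1 ≤ q)]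

set_option synthInstance.maxHeartbeats 1000000 in
set_option maxHeartbeats 1000000 in
theorem notCompact (hp : p ≠ ⊤) (hq : q ≠ ⊤)
    (ι : lp (fun _ : ℕ => ℝ) p →L[ℝ] lp (fun _ : ℕ => ℝ) q)
    (hι : ∀ (x : lp (fun _ : ℕ => ℝ) p) (n : ℕ), (ι x : ∀ _ : ℕ, ℝ) n = (x : ∀ _ : ℕ, ℝ) n) :
    ¬ IsCompact (closure (⇑ι '' Metric.closedBall 0 1)) := by
  intro hK
  have hpr : 0 < p.toReal :=
    ENNReal.toReal_pos (lt_of_lt_of_le one_pos (Fact.out : 1 ≤ p)).ne' hp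
  set u : ℕ → lp (fun _ : ℕ => ℝ) q := fun n : ℕ => ι ((lp.single p n (1:ℝ) : lp (fun _ : ℕ => ℝ) p)) with hu
  have hnorm1 : ∀ n : ℕ, ‖(lp.single p n (1:ℝ) : lp (fun _ : ℕ => ℝ) p)‖ = 1 := by
    intro n
    simpa using lp.norm_single (E := fun _ : ℕ => ℝ) (zero_lt_one.trans_le (Fact.out : 1 ≤ p)) n (1:ℝ)
  have hmem : ∀ n, u n ∈ closure (⇑ι '' Metric.closedBall 0 1) := by
    intro n
    apply subset_closure
    exact ⟨(lp.single p n (1:ℝ) : lp (fun _ : ℕ => ℝ) p), by simp [Metric.mem_closedBall, dist_eq_norm, hnorm1 n], rfl⟩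
  have hsep : ∀ m n : ℕ, m ≠ n → 1 ≤ dist (u m) (u n) := by
    intro m n hmn
    rw [dist_eq_norm]
    have hqz : q ≠ 0 := by
      intro h
      exact (lt_irrefl (0:ℝ≥0∞)) (lt_of_lt_of_le one_pos ((h ▸ (Fact.out : 1 ≤ q))))
    have := lp.norm_apply_le_norm hqz (u m - u n) m
    have hcoord : ((u m - u n : lp (fun _ : ℕ => ℝ) q) : ∀ _ : ℕ, ℝ) m = 1 := by
      have h1 : (u m : ∀ _ : ℕ, ℝ) m = 1 := by
        rw [hu]; rw [hι]; exact lp.single_apply_self (E := fun _ : ℕ => ℝ) p m (1:ℝ)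
      have h2 : (u n : ∀ _ : ℕ, ℝ) m = 0 := by
        rw [hu]; rw [hι]; exact lp.single_apply_ne (E := fun _ : ℕ => ℝ) p n (1:ℝ) hmn
      simp [lp.coeFn_sub, h1, h2]
    calc (1:ℝ) = ‖((u m - u n : lp (fun _ : ℕ => ℝ) q) : ∀ _ : ℕ, ℝ) m‖ := by rw [hcoord]; simp
      _ ≤ ‖u m - u n‖ := this
  obtain ⟨a, -, φ, hφ, hconv⟩ := hK.tendsto_subseq hmem
  have hcauchy : CauchySeq (u ∘ φ) := hconv.cauchySeq
  rw [Metric.cauchySeq_iff'] at hcauchy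
  obtain ⟨N, hN⟩ := hcauchy 1 one_pos
  have := hN (N + 1) (Nat.le_succ N)
  have hne : φ (N + 1) ≠ φ N := fun h => (Nat.succ_ne_self N) (hφ.injective h)
  exact absurd this (not_lt.2 (hsep _ _ hne))
end
set_option maxHeartbeats 2000000 in
theorem strictSingular (p q : ℝ≥0∞) [Fact (1 ≤ p)] [Fact (1 ≤ q)]
    (hq : q ≠ ⊤) (hpq : p < q)
    (ι : lp (fun _ : ℕ => ℝ) p →L[ℝ] lp (fun _ : ℕ => ℝ) q)
    (hι : ∀ (x : lp (fun _ : ℕ => ℝ) p) (k : ℕ), (ι x : ∀ _ : ℕ, ℝ) k = (x : ∀ _ : ℕ, ℝ) k)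
    (hle : ∀ f, ‖ι f‖ ≤ ‖f‖)
    (M : Submodule ℝ (lp (fun _ : ℕ => ℝ) p))
    (hbd : ∃ c > 0, ∀ x ∈ M, c * ‖x‖ ≤ ‖ι x‖) : FiniteDimensional ℝ M := by
  obtain ⟨c, hc, hbd⟩ := hbd
  by_contra hM
  have hp : p ≠ ⊤ := (hpq.trans_le le_top).ne
  have hpr : 0 < p.toReal :=
    ENNReal.toReal_pos (lt_of_lt_of_le one_pos (Fact.out : 1 ≤ p)).ne' hp
  have hqr : 0 < q.toReal :=
    ENNReal.toReal_pos (lt_of_lt_of_le one_pos (Fact.out : 1 ≤ q)).ne' hq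
  have hpr1 : 1 ≤ p.toReal := by
    have := ENNReal.toReal_mono hp (Fact.out : 1 ≤ p)
    simpa using this
  have hprqr : p.toReal < q.toReal := ENNReal.toReal_strict_mono hq hpq
  -- choose n
  set α : ℝ := 1 / p.toReal - 1 / q.toReal with hα
  have hα0 : 0 < α := by
    rw [hα, sub_pos]
    exact one_div_lt_one_div_of_lt hpr hprqr
  obtain ⟨n, hn6, hn1⟩ : ∃ n : ℕ, 6 / c < (n : ℝ) ^ α ∧ 1 ≤ n := by
    have h1 : Filter.Tendsto (fun x : ℝ => x ^ α) Filter.atTop Filter.atTop :=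
      tendsto_rpow_atTop hα0
    have h2 : Filter.Tendsto (fun n : ℕ => ((n : ℝ)) ^ α) Filter.atTop Filter.atTop :=
      h1.comp tendsto_natCast_atTop_atTop
    obtain ⟨n, hn⟩ := ((h2.eventually_gt_atTop (6 / c)).and
      (Filter.eventually_ge_atTop 1)).exists
    exact ⟨n, hn.1, hn.2⟩
  have hn0 : (0 : ℝ) < n := by exact_mod_cast hn1
  -- choose δ, ε
  set δ : ℝ := 1 / (4 * n) with hδdef
  have hδ0 : 0 < δ := by positivity
  have hn1' : (1:ℝ) ≤ (n:ℝ) := by exact_mod_cast hn1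
  have hnδ : (n : ℝ) * δ = 1 / 4 := by rw [hδdef]; field_simp
  have hδ1 : δ ≤ 1 / 4 := by
    have h4 : (4:ℝ) ≤ 4 * n := by nlinarith
    rw [hδdef]
    exact one_div_le_one_div_of_le (by norm_num) h4
  set ε : ℝ := δ ^ p.toReal with hεdef
  have hε0 : 0 < ε := Real.rpow_pos_of_pos hδ0 _
  have hεδ : ε ≤ δ := by
    calc ε = δ ^ p.toReal := rfl
      _ ≤ δ ^ (1:ℝ) := Real.rpow_le_rpow_of_exponent_ge hδ0 (by linarith) hpr1
      _ = δ := Real.rpow_one δ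
  have hε14 : ε ≤ 1/4 := hεδ.trans hδ1
  have hεr : ε ^ (1 / p.toReal) = δ := rpow_self_inv p.toReal hδ0.le hpr.ne'
  -- the recursion
  have vspec := fun N => (exists_unit_vanish p M hM N).choose_spec
  set vec : ℕ → lp (fun _ : ℕ => ℝ) p := fun N => (exists_unit_vanish p M hM N).choose with hvec
  have nspec := fun N => (exists_cutoff p hp (vec N) (vspec N).2.1 ε hε0 N).choose_spec
  set nxt : ℕ → ℕ := fun N => (exists_cutoff p hp (vec N) (vspec N).2.1 ε hε0 N).choose
    with hnxt
  set NN : ℕ → ℕ := fun i => nxt^[i] 0 with hNN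
  have hNN0 : NN 0 = 0 := rfl
  have hNNsucc : ∀ i, NN (i + 1) = nxt (NN i) := fun i => Function.iterate_succ_apply' nxt i 0
  have hNNlt : ∀ i, NN i < NN (i + 1) := fun i => by rw [hNNsucc]; exact (nspec (NN i)).1
  have hNNmono : StrictMono NN := strictMono_nat_of_lt_succ hNNlt
  set x : ℕ → lp (fun _ : ℕ => ℝ) p := fun i => vec (NN i) with hx
  have hxM : ∀ i, x i ∈ M := fun i => (vspec (NN i)).1
  have hxnorm : ∀ i, ‖x i‖ = 1 := fun i => (vspec (NN i)).2.1
  have hxvan : ∀ i, ∀ k < NN i, (x i : ∀ _ : ℕ, ℝ) k = 0 := fun i => (vspec (NN i)).2.2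
  have hxcut : ∀ i, 1 - ε ≤ ∑ k ∈ Finset.range (NN (i+1)), ‖(x i : ∀ _ : ℕ, ℝ) k‖ ^ p.toReal :=
    fun i => by rw [hNNsucc]; exact (nspec (NN i)).2
  -- basic sum bounds
  have sum_le_one : ∀ i, ∀ s : Finset ℕ,
      ∑ k ∈ s, ‖(x i : ∀ _ : ℕ, ℝ) k‖ ^ p.toReal ≤ 1 := by
    intro i s
    have := lp.sum_rpow_le_norm_rpow hpr (x i) s
    rwa [hxnorm i, Real.one_rpow] at this
  have tail_bound : ∀ j, ∀ s : Finset ℕ, (∀ k ∈ s, NN (j+1) ≤ k) →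
      ∑ k ∈ s, ‖(x j : ∀ _ : ℕ, ℝ) k‖ ^ p.toReal ≤ ε := by
    intro j s hs
    have hdisj : Disjoint s (Finset.range (NN (j+1))) := by
      rw [Finset.disjoint_left]
      intro k hk hk'
      exact absurd (Finset.mem_range.1 hk') (not_lt.2 (hs k hk))
    have := sum_le_one j (s ∪ Finset.range (NN (j+1)))
    rw [Finset.sum_union hdisj] at this
    have h2 := hxcut j
    linarith
  -- the vector y
  set y : lp (fun _ : ℕ => ℝ) p := ∑ i ∈ Finset.range n, x i with hy
  have hyM : y ∈ M := Submodule.sum_mem M fun i _ => hxM i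
  set B : ℕ → Finset ℕ := fun i => Finset.Ico (NN i) (NN (i+1)) with hB
  -- telescoping
  have tel : ∀ g : ℕ → ℝ,
      ∑ i ∈ Finset.range n, ∑ k ∈ B i, g k = ∑ k ∈ Finset.range (NN n), g k := by
    intro g
    have h1 : ∀ i : ℕ, ∑ k ∈ B i, g k =
        (∑ k ∈ Finset.range (NN (i+1)), g k) - ∑ k ∈ Finset.range (NN i), g k := fun i =>
      Finset.sum_Ico_eq_sub g (hNNlt i).le
    calc ∑ i ∈ Finset.range n, ∑ k ∈ B i, g k
        = ∑ i ∈ Finset.range n,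
          ((∑ k ∈ Finset.range (NN (i+1)), g k) - ∑ k ∈ Finset.range (NN i), g k) :=
          Finset.sum_congr rfl fun i _ => h1 i
      _ = (∑ k ∈ Finset.range (NN n), g k) - ∑ k ∈ Finset.range (NN 0), g k :=
          Finset.sum_range_sub (fun m => ∑ k ∈ Finset.range (NN m), g k) n
      _ = ∑ k ∈ Finset.range (NN n), g k := by rw [hNN0]; simp
  -- block estimates on x
  have block_xi_lower : ∀ i, 1 - ε ≤ ‖hdS (B i) (x i)‖ ^ p.toReal := by
    intro i
    rw [norm_hdS_rpow hpr]
    have hvansum : ∑ k ∈ Finset.range (NN i), ‖(x i : ∀ _ : ℕ, ℝ) k‖ ^ p.toReal = 0 :=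
      Finset.sum_eq_zero fun k hk => by
        rw [hxvan i k (Finset.mem_range.1 hk), norm_zero, Real.zero_rpow hpr.ne']
    have heq : ∑ k ∈ B i, ‖(x i : ∀ _ : ℕ, ℝ) k‖ ^ p.toReal =
        ∑ k ∈ Finset.range (NN (i+1)), ‖(x i : ∀ _ : ℕ, ℝ) k‖ ^ p.toReal := by
      have := Finset.sum_Ico_eq_sub (fun k => ‖(x i : ∀ _ : ℕ, ℝ) k‖ ^ p.toReal) (hNNlt i).le
      rw [show ∑ k ∈ B i, ‖(x i : ∀ _ : ℕ, ℝ) k‖ ^ p.toReal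
          = ∑ k ∈ Finset.Ico (NN i) (NN (i+1)), ‖(x i : ∀ _ : ℕ, ℝ) k‖ ^ p.toReal from rfl,
        this, hvansum]
      ring
    rw [heq]
    exact hxcut i
  have block_xi_upper : ∀ i, ‖hdS (B i) (x i)‖ ≤ 1 := by
    intro i
    by_contra hcon
    push_neg at hcon
    have h0 : (0:ℝ) < ‖hdS (B i) (x i)‖ := lt_of_le_of_lt zero_le_one hcon
    have h2 : 1 < ‖hdS (B i) (x i)‖ ^ p.toReal :=
      (Real.one_lt_rpow_iff_of_pos h0).2 (Or.inl ⟨hcon, hpr⟩)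
    have h1 : ‖hdS (B i) (x i)‖ ^ p.toReal ≤ 1 := by
      rw [norm_hdS_rpow hpr]; exact sum_le_one i _
    linarith
  have cross : ∀ i j, j ≠ i → ‖hdS (B i) (x j)‖ ≤ δ := by
    intro i j hne
    rcases lt_or_gt_of_ne hne with hji | hji
    · have hsum : ∑ k ∈ B i, ‖(x j : ∀ _ : ℕ, ℝ) k‖ ^ p.toReal ≤ ε := by
        apply tail_bound j
        intro k hk
        have h1 : NN i ≤ k := (Finset.mem_Ico.1 hk).1
        exact le_trans (hNNmono.le_iff_le.2 hji) h1
      calc ‖hdS (B i) (x j)‖ = (‖hdS (B i) (x j)‖ ^ p.toReal) ^ (1 / p.toReal) :=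
            (rpow_self_inv p.toReal (norm_nonneg _) hpr.ne').symm
        _ ≤ ε ^ (1 / p.toReal) := by
            apply Real.rpow_le_rpow (Real.rpow_nonneg (norm_nonneg _) _) _ (by positivity)
            rw [norm_hdS_rpow hpr]; exact hsum
        _ = δ := hεr
    · have hz : hdS (B i) (x j) = 0 := by
        apply hdS_eq_zero
        intro k hk
        apply hxvan j
        have h1 : k < NN (i+1) := (Finset.mem_Ico.1 hk).2
        exact lt_of_lt_of_le h1 (hNNmono.le_iff_le.2 hji)
      rw [hz, norm_zero]
      exact hδ0.le
  -- difference estimate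
  have hdiff : ∀ i < n, ‖hdS (B i) y - hdS (B i) (x i)‖ ≤ n * δ := by
    intro i hi
    have hdecomp : hdS (B i) y = ∑ j ∈ Finset.range n, hdS (B i) (x j) := hdS_sum _ n x
    have heq : hdS (B i) y - hdS (B i) (x i)
        = ∑ j ∈ (Finset.range n).erase i, hdS (B i) (x j) := by
      rw [hdecomp, ← Finset.add_sum_erase _ _ (Finset.mem_range.2 hi), add_sub_cancel_left]
    rw [heq]
    calc ‖∑ j ∈ (Finset.range n).erase i, hdS (B i) (x j)‖
        ≤ ∑ j ∈ (Finset.range n).erase i, ‖hdS (B i) (x j)‖ := norm_sum_le _ _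
      _ ≤ ∑ _j ∈ (Finset.range n).erase i, δ :=
          Finset.sum_le_sum fun j hj => cross i j (Finset.mem_erase.1 hj).1
      _ = ((Finset.range n).erase i).card * δ := by rw [Finset.sum_const, nsmul_eq_mul]
      _ ≤ n * δ := by
          apply mul_le_mul_of_nonneg_right _ hδ0.le
          have := Finset.card_erase_le (s := Finset.range n) (a := i)
          rw [Finset.card_range] at this
          exact_mod_cast this
  -- block estimates on y
  have blocky_lower : ∀ i < n, (1/2 : ℝ) ≤ ‖hdS (B i) y‖ := by
    intro i hi
    have h1 : (1 - ε) ^ (1 / p.toReal) ≤ ‖hdS (B i) (x i)‖ := by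
      calc (1 - ε) ^ (1 / p.toReal) ≤ (‖hdS (B i) (x i)‖ ^ p.toReal) ^ (1 / p.toReal) :=
            Real.rpow_le_rpow (by linarith) (block_xi_lower i) (by positivity)
        _ = ‖hdS (B i) (x i)‖ := rpow_self_inv p.toReal (norm_nonneg _) hpr.ne'
    have h2 : (1 : ℝ) - ε ≤ (1 - ε) ^ (1 / p.toReal) := by
      have := Real.rpow_le_rpow_of_exponent_ge (x := 1 - ε) (by linarith) (by linarith)
        (show 1 / p.toReal ≤ 1 by rw [div_le_one hpr]; linarith)
      rwa [Real.rpow_one] at this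
    have h5 : ‖hdS (B i) (x i)‖ - ‖hdS (B i) y‖ ≤ n * δ := by
      calc ‖hdS (B i) (x i)‖ - ‖hdS (B i) y‖ ≤ ‖hdS (B i) (x i) - hdS (B i) y‖ :=
            norm_sub_norm_le _ _
        _ = ‖hdS (B i) y - hdS (B i) (x i)‖ := norm_sub_rev _ _
        _ ≤ n * δ := hdiff i hi
    linarith [hnδ]
  have blocky_upper : ∀ i < n, ‖hdS (B i) y‖ ≤ 2 := by
    intro i hi
    have h4 : ‖hdS (B i) y‖ ≤ ‖hdS (B i) (x i)‖ + ‖hdS (B i) y - hdS (B i) (x i)‖ := by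
      calc ‖hdS (B i) y‖ = ‖hdS (B i) (x i) + (hdS (B i) y - hdS (B i) (x i))‖ := by
            congr 1
            abel
        _ ≤ _ := norm_add_le _ _
    have h5 := block_xi_upper i
    have h6 := hdiff i hi
    linarith [hnδ]
  -- lower bound on ‖y‖
  have ylower : (n : ℝ) ^ (1 / p.toReal) * (1/2) ≤ ‖y‖ := by
    have h1 : (n : ℝ) * ((1/2 : ℝ) ^ p.toReal) ≤ ‖y‖ ^ p.toReal := by
      have hsum : ∑ i ∈ Finset.range n, ‖hdS (B i) y‖ ^ p.toReal ≤ ‖y‖ ^ p.toReal := by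
        calc ∑ i ∈ Finset.range n, ‖hdS (B i) y‖ ^ p.toReal
            = ∑ i ∈ Finset.range n, ∑ k ∈ B i, ‖(y : ∀ _ : ℕ, ℝ) k‖ ^ p.toReal :=
              Finset.sum_congr rfl fun i _ => norm_hdS_rpow hpr _ _
          _ = ∑ k ∈ Finset.range (NN n), ‖(y : ∀ _ : ℕ, ℝ) k‖ ^ p.toReal := tel _
          _ ≤ ‖y‖ ^ p.toReal := lp.sum_rpow_le_norm_rpow hpr y _
      have each : ∀ i ∈ Finset.range n, (1/2 : ℝ) ^ p.toReal ≤ ‖hdS (B i) y‖ ^ p.toReal :=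
        fun i hi => Real.rpow_le_rpow (by norm_num)
          (blocky_lower i (Finset.mem_range.1 hi)) hpr.le
      calc (n : ℝ) * ((1/2 : ℝ) ^ p.toReal)
          = ∑ _i ∈ Finset.range n, (1/2 : ℝ) ^ p.toReal := by
            rw [Finset.sum_const, Finset.card_range, nsmul_eq_mul]
        _ ≤ ∑ i ∈ Finset.range n, ‖hdS (B i) y‖ ^ p.toReal := Finset.sum_le_sum each
        _ ≤ ‖y‖ ^ p.toReal := hsum
    calc (n : ℝ) ^ (1 / p.toReal) * (1/2)
        = ((n : ℝ) * ((1/2 : ℝ) ^ p.toReal)) ^ (1 / p.toReal) := by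
          rw [Real.mul_rpow hn0.le (Real.rpow_nonneg (by norm_num) _),
            rpow_self_inv p.toReal (by norm_num) hpr.ne']
      _ ≤ (‖y‖ ^ p.toReal) ^ (1 / p.toReal) :=
          Real.rpow_le_rpow (by positivity) h1 (by positivity)
      _ = ‖y‖ := rpow_self_inv p.toReal (norm_nonneg _) hpr.ne'
  -- upper bound: head part
  have hcoeH : ∀ s : Finset ℕ, ι (hdS s y) = hdS s (ι y) := by
    intro s
    ext k
    rw [hι, hdS_apply, hdS_apply]
    by_cases h : k ∈ s
    · rw [if_pos h, if_pos h, hι]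
    · rw [if_neg h, if_neg h]
  have yupperH : ‖ι (hdS (Finset.range (NN n)) y)‖ ≤ 2 * (n : ℝ) ^ (1 / q.toReal) := by
    have h1 : ‖ι (hdS (Finset.range (NN n)) y)‖ ^ q.toReal ≤ (n : ℝ) * (2:ℝ) ^ q.toReal := by
      rw [hcoeH, norm_hdS_rpow hqr]
      have hcoord : ∀ k : ℕ, ‖(ι y : ∀ _ : ℕ, ℝ) k‖ ^ q.toReal = ‖(y : ∀ _ : ℕ, ℝ) k‖ ^ q.toReal :=
        fun k => by rw [hι]
      calc ∑ k ∈ Finset.range (NN n), ‖(ι y : ∀ _ : ℕ, ℝ) k‖ ^ q.toReal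
          = ∑ k ∈ Finset.range (NN n), ‖(y : ∀ _ : ℕ, ℝ) k‖ ^ q.toReal :=
            Finset.sum_congr rfl fun k _ => hcoord k
        _ = ∑ i ∈ Finset.range n, ∑ k ∈ B i, ‖(y : ∀ _ : ℕ, ℝ) k‖ ^ q.toReal := (tel _).symm
        _ ≤ ∑ _i ∈ Finset.range n, (2:ℝ) ^ q.toReal := by
            apply Finset.sum_le_sum
            intro i hi
            have h2 : ∑ k ∈ B i, ‖(y : ∀ _ : ℕ, ℝ) k‖ ^ q.toReal
                = ‖hdS (B i) (ι y)‖ ^ q.toReal := by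
              rw [norm_hdS_rpow hqr]
              exact Finset.sum_congr rfl fun k _ => (hcoord k).symm
            rw [h2, ← hcoeH]
            have h3 : ‖ι (hdS (B i) y)‖ ≤ 2 := (hle _).trans (blocky_upper i (Finset.mem_range.1 hi))
            exact Real.rpow_le_rpow (norm_nonneg _) h3 hqr.le
        _ = (n : ℝ) * (2:ℝ) ^ q.toReal := by
            rw [Finset.sum_const, Finset.card_range, nsmul_eq_mul]
    calc ‖ι (hdS (Finset.range (NN n)) y)‖
        = (‖ι (hdS (Finset.range (NN n)) y)‖ ^ q.toReal) ^ (1 / q.toReal) :=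
          (rpow_self_inv q.toReal (norm_nonneg _) hqr.ne').symm
      _ ≤ ((n : ℝ) * (2:ℝ) ^ q.toReal) ^ (1 / q.toReal) :=
          Real.rpow_le_rpow (Real.rpow_nonneg (norm_nonneg _) _) h1 (by positivity)
      _ = 2 * (n : ℝ) ^ (1 / q.toReal) := by
          rw [Real.mul_rpow hn0.le (Real.rpow_nonneg (by norm_num) _),
            rpow_self_inv q.toReal (by norm_num) hqr.ne', mul_comm]
  -- upper bound: tail part
  have yupperT : ‖ι (y - hdS (Finset.range (NN n)) y)‖ ≤ n * δ := by
    refine (hle _).trans ?_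
    have heq : y - hdS (Finset.range (NN n)) y
        = ∑ j ∈ Finset.range n, (x j - hdS (Finset.range (NN n)) (x j)) := by
      rw [hy, hdS_sum, ← Finset.sum_sub_distrib]
    rw [heq]
    calc ‖∑ j ∈ Finset.range n, (x j - hdS (Finset.range (NN n)) (x j))‖
        ≤ ∑ j ∈ Finset.range n, ‖x j - hdS (Finset.range (NN n)) (x j)‖ := norm_sum_le _ _
      _ ≤ ∑ _j ∈ Finset.range n, δ := by
          apply Finset.sum_le_sum
          intro j hj
          have hsub : Finset.range (NN (j+1)) ⊆ Finset.range (NN n) := by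
            apply Finset.range_subset_range.2
            exact hNNmono.le_iff_le.2 (Finset.mem_range.1 hj)
          have h1 : 1 - ε ≤ ∑ k ∈ Finset.range (NN n), ‖(x j : ∀ _ : ℕ, ℝ) k‖ ^ p.toReal :=
            le_trans (hxcut j) (Finset.sum_le_sum_of_subset_of_nonneg hsub
              fun k _ _ => Real.rpow_nonneg (norm_nonneg _) _)
          have h2 : ‖x j - hdS (Finset.range (NN n)) (x j)‖ ^ p.toReal ≤ ε := by
            rw [norm_sub_hdS_rpow hpr, hxnorm j, Real.one_rpow]
            linarith
          calc ‖x j - hdS (Finset.range (NN n)) (x j)‖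
              = (‖x j - hdS (Finset.range (NN n)) (x j)‖ ^ p.toReal) ^ (1 / p.toReal) :=
                (rpow_self_inv p.toReal (norm_nonneg _) hpr.ne').symm
            _ ≤ ε ^ (1 / p.toReal) :=
                Real.rpow_le_rpow (Real.rpow_nonneg (norm_nonneg _) _) h2 (by positivity)
            _ = δ := hεr
      _ = n * δ := by rw [Finset.sum_const, Finset.card_range, nsmul_eq_mul]
  -- assemble
  have yupper : ‖ι y‖ ≤ 2 * (n : ℝ) ^ (1 / q.toReal) + 1/4 := by
    have hsplit : ι y = ι (hdS (Finset.range (NN n)) y) + ι (y - hdS (Finset.range (NN n)) y) := by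
      rw [← map_add]
      congr 1
      abel
    calc ‖ι y‖ ≤ ‖ι (hdS (Finset.range (NN n)) y)‖ + ‖ι (y - hdS (Finset.range (NN n)) y)‖ := by
          rw [hsplit]; exact norm_add_le _ _
      _ ≤ 2 * (n : ℝ) ^ (1 / q.toReal) + n * δ := add_le_add yupperH yupperT
      _ = 2 * (n : ℝ) ^ (1 / q.toReal) + 1/4 := by rw [hnδ]
  -- final contradiction
  have hq1 : (1:ℝ) ≤ (n : ℝ) ^ (1 / q.toReal) :=
    Real.one_le_rpow (by exact_mod_cast hn1) (by positivity)
  have hmain : c * ((n : ℝ) ^ (1 / p.toReal) * (1/2)) ≤ 3 * (n : ℝ) ^ (1 / q.toReal) := by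
    have := hbd y hyM
    have h1 : c * ((n : ℝ) ^ (1 / p.toReal) * (1/2)) ≤ c * ‖y‖ :=
      mul_le_mul_of_nonneg_left ylower hc.le
    linarith
  have hsplitpow : (n : ℝ) ^ (1 / p.toReal) = (n : ℝ) ^ α * (n : ℝ) ^ (1 / q.toReal) := by
    rw [← Real.rpow_add hn0, hα]
    ring_nf
  have hqpos : (0:ℝ) < (n : ℝ) ^ (1 / q.toReal) := Real.rpow_pos_of_pos hn0 _
  have h6 : 6 < c * (n : ℝ) ^ α := by
    rw [div_lt_iff₀ hc] at hn6
    linarith [hn6]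
  nlinarith [hmain, hsplitpow, hqpos, h6, Real.rpow_pos_of_pos hn0 α]

end StrictSingularHelpers

/-- For `1 ≤ p < q < ∞`, the natural inclusion `ℓ^p → ℓ^q` is a well-defined injective
bounded linear operator that is strictly singular but not compact. -/
theorem stmt_6
    (p q : ℝ≥0∞) [Fact (1 ≤ p)] [Fact (1 ≤ q)]
    (hq : q ≠ ⊤) (hpq : p < q) :
    ∃ ι : lp (fun _ : ℕ => ℝ) p →L[ℝ] lp (fun _ : ℕ => ℝ) q,
      (∀ (x : lp (fun _ : ℕ => ℝ) p) (n : ℕ), (ι x : ∀ _ : ℕ, ℝ) n = (x : ∀ _ : ℕ, ℝ) n) ∧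
      Function.Injective ι ∧
      (∀ M : Submodule ℝ (lp (fun _ : ℕ => ℝ) p),
        (∃ c > 0, ∀ x ∈ M, c * ‖x‖ ≤ ‖ι x‖) → FiniteDimensional ℝ M) ∧
      ¬ IsCompact (closure (⇑ι '' Metric.closedBall 0 1)) := by
  have hp : p ≠ ⊤ := (hpq.trans_le le_top).ne
  refine ⟨inclCLM p q hq hpq.le, fun x n => rfl, inclCLM_inj p q hq hpq.le, ?_, ?_⟩
  · intro M hbdM
    exact strictSingular p q hq hpq (inclCLM p q hq hpq.le) (fun x k => rfl)
      (inclCLM_norm_le p q hq hpq.le) M hbdM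
  · exact notCompact p q hp hq (inclCLM p q hq hpq.le) (fun x n => rfl)
end

section
/- Let X and Y be Banach spaces and A : X → Y a bounded linear operator whose kernel N(A) is NOT complemented in X (i.e., N(A) admits no closed algebraic complement). Then for every (not necessarily closed) algebraic complement U of N(A) in X, the generalized pseudoinverse of A corresponding to U is unbounded: there is no constant C ≥ 0 with ‖x‖ ≤ C ‖A x‖ for all x ∈ U. -/
/-- If the kernel of a bounded linear operator `A : X → Y` between Banach spaces is not
complemented (admits no closed algebraic complement), then for every algebraic complement
`U` of the kernel the generalized pseudoinverse is unbounded: there is no `C ≥ 0` with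
`‖x‖ ≤ C ‖A x‖` for all `x ∈ U`. -/
theorem stmt_8
    {X Y : Type*} [NormedAddCommGroup X] [NormedSpace ℝ X] [CompleteSpace X]
    [NormedAddCommGroup Y] [NormedSpace ℝ Y] [CompleteSpace Y]
    (A : X →L[ℝ] Y)
    (h : ¬ ∃ U : Submodule ℝ X, IsClosed (U : Set X) ∧
      LinearMap.ker (A : X →ₗ[ℝ] Y) ⊓ U = ⊥ ∧ LinearMap.ker (A : X →ₗ[ℝ] Y) ⊔ U = ⊤) :
    ∀ U : Submodule ℝ X, LinearMap.ker (A : X →ₗ[ℝ] Y) ⊓ U = ⊥ → LinearMap.ker (A : X →ₗ[ℝ] Y) ⊔ U = ⊤ →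
      ¬ ∃ C : ℝ, 0 ≤ C ∧ ∀ x ∈ U, ‖x‖ ≤ C * ‖A x‖ := by
  intro U hinf hsup
  rintro ⟨C, hC, hbound⟩
  apply h
  refine ⟨U.topologicalClosure, U.isClosed_topologicalClosure, ?_, ?_⟩
  · -- kernel meets closure trivially
    rw [eq_bot_iff]
    rintro x ⟨hxk, hxc⟩
    have hxc' : x ∈ closure (U : Set X) := hxc
    obtain ⟨u, hu, hlim⟩ := mem_closure_iff_seq_limit.mp hxc'
    have hAx : A x = 0 := hxk
    have hAu : Filter.Tendsto (fun n => A (u n)) Filter.atTop (nhds 0) := by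
      have := (A.continuous.tendsto x).comp hlim
      rwa [hAx] at this
    have hnorm : Filter.Tendsto (fun n => C * ‖A (u n)‖) Filter.atTop (nhds 0) := by
      have := (tendsto_norm_zero.comp hAu).const_mul C
      simpa using this
    have hu0 : Filter.Tendsto u Filter.atTop (nhds 0) := by
      apply squeeze_zero_norm (fun n => hbound (u n) (hu n)) hnorm
    have : x = 0 := tendsto_nhds_unique hlim hu0
    simp [this]
  · -- spans everything
    rw [eq_top_iff, ← hsup]
    exact sup_le_sup_left U.le_topologicalClosure _
end

section
/- Let X and Y be Banach spaces and A : X → Y a bounded linear operator. Then the range R(A) is closed in Y and the kernel N(A) is complemented in X if and only if there exists a subspace U of X with N(A) ∩ U = {0} and N(A) + U = X and a constant C ≥ 0 such that ‖x‖ ≤ C ‖A x‖ for all x ∈ U (i.e., the generalized pseudoinverse A_U† : R(A) → U is a bounded linear operator for some decomposition X = N(A) ⊕ U). -/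
/-- `R(A)` is closed and `N(A)` is complemented in `X` if and only if there is a
decomposition `X = N(A) ⊕ U` for which the generalized pseudoinverse is bounded,
i.e. `‖x‖ ≤ C ‖A x‖` for all `x ∈ U`. -/
theorem stmt_9
    {X Y : Type*} [NormedAddCommGroup X] [NormedSpace ℝ X] [CompleteSpace X]
    [NormedAddCommGroup Y] [NormedSpace ℝ Y] [CompleteSpace Y]
    (A : X →L[ℝ] Y) :
    (IsClosed ((LinearMap.range (A : X →ₗ[ℝ] Y) : Submodule ℝ Y) : Set Y) ∧
      ∃ U : Submodule ℝ X, IsClosed (U : Set X) ∧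
        LinearMap.ker (A : X →ₗ[ℝ] Y) ⊓ U = ⊥ ∧ LinearMap.ker (A : X →ₗ[ℝ] Y) ⊔ U = ⊤) ↔
    (∃ U : Submodule ℝ X, LinearMap.ker (A : X →ₗ[ℝ] Y) ⊓ U = ⊥ ∧ LinearMap.ker (A : X →ₗ[ℝ] Y) ⊔ U = ⊤ ∧
      ∃ C : ℝ, 0 ≤ C ∧ ∀ x ∈ U, ‖x‖ ≤ C * ‖A x‖) := by
  constructor
  · rintro ⟨hclosed, U, hUclosed, hinf, hsup⟩
    haveI : CompleteSpace U := hUclosed.completeSpace_coe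
    haveI : CompleteSpace (LinearMap.range (A : X →ₗ[ℝ] Y)) := hclosed.completeSpace_coe
    set f : U →L[ℝ] (LinearMap.range (A : X →ₗ[ℝ] Y)) :=
      (A.comp U.subtypeL).codRestrict _ (fun u => LinearMap.mem_range_self (A : X →ₗ[ℝ] Y) u.1) with hf
    have hker : LinearMap.ker (f : U →ₗ[ℝ] (LinearMap.range (A : X →ₗ[ℝ] Y))) = ⊥ := by
      rw [LinearMap.ker_eq_bot']
      rintro ⟨u, hu⟩ h
      have hAu : A u = 0 := by
        have := congrArg Subtype.val h
        exact this
      have : u ∈ LinearMap.ker (A : X →ₗ[ℝ] Y) ⊓ U := ⟨hAu, hu⟩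
      rw [hinf] at this
      simpa using this
    have hrange : LinearMap.range (f : U →ₗ[ℝ] (LinearMap.range (A : X →ₗ[ℝ] Y))) = ⊤ := by
      rw [LinearMap.range_eq_top]
      rintro ⟨y, hy⟩
      obtain ⟨x, hx⟩ := hy
      have hxtop : x ∈ LinearMap.ker (A : X →ₗ[ℝ] Y) ⊔ U := by rw [hsup]; trivial
      obtain ⟨k, hk, u, hu, hku⟩ := Submodule.mem_sup.mp hxtop
      refine ⟨⟨u, hu⟩, ?_⟩
      ext
      have hAk : A k = 0 := hk
      simp only [hf, ContinuousLinearMap.coe_codRestrict_apply,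
        ContinuousLinearMap.comp_apply, Submodule.subtypeL_apply]
      calc A u = A (k + u) - A k := by rw [map_add]; abel
        _ = y := by rw [hku, hAk, ← ContinuousLinearMap.coe_coe, hx]; abel
    let e := ContinuousLinearEquiv.ofBijective f hker hrange
    refine ⟨U, hinf, hsup, ‖(e.symm : (LinearMap.range (A : X →ₗ[ℝ] Y)) →L[ℝ] U)‖, norm_nonneg _, ?_⟩
    intro x hx
    have h1 : e.symm (e ⟨x, hx⟩) = ⟨x, hx⟩ := e.symm_apply_apply _
    have h2 : ‖(⟨x, hx⟩ : U)‖ = ‖x‖ := rfl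
    have h3 : ‖e ⟨x, hx⟩‖ = ‖A x‖ := rfl
    calc ‖x‖ = ‖e.symm (e ⟨x, hx⟩)‖ := by rw [h1, h2]
      _ ≤ ‖(e.symm : (LinearMap.range (A : X →ₗ[ℝ] Y)) →L[ℝ] U)‖ * ‖e ⟨x, hx⟩‖ :=
        (e.symm : (LinearMap.range (A : X →ₗ[ℝ] Y)) →L[ℝ] U).le_opNorm _
      _ = ‖(e.symm : (LinearMap.range (A : X →ₗ[ℝ] Y)) →L[ℝ] U)‖ * ‖A x‖ := by rw [h3]
  · rintro ⟨U, hinf, hsup, C, hC, hbound⟩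
    have hdecomp : ∀ x : X, ∃ k ∈ LinearMap.ker (A : X →ₗ[ℝ] Y), ∃ u ∈ U, k + u = x := by
      intro x
      have hxtop : x ∈ LinearMap.ker (A : X →ₗ[ℝ] Y) ⊔ U := by rw [hsup]; trivial
      exact Submodule.mem_sup.mp hxtop
    have hUclosed : IsClosed (U : Set X) := by
      apply IsSeqClosed.isClosed
      intro x p hx hxp
      obtain ⟨k, hk, u, hu, hku⟩ := hdecomp p
      have hAk : A k = 0 := hk
      have hAp : A p = A u := by rw [← hku, map_add, hAk, zero_add]
      have hle : ∀ n, ‖x n - u‖ ≤ C * ‖A (x n) - A p‖ := by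
        intro n
        have := hbound (x n - u) (sub_mem (hx n) hu)
        simpa [map_sub, hAp] using this
      have ht1 : Filter.Tendsto (fun n => ‖x n - u‖) Filter.atTop (nhds ‖p - u‖) :=
        ((hxp.sub_const u).norm)
      have ht2 : Filter.Tendsto (fun n => C * ‖A (x n) - A p‖) Filter.atTop (nhds 0) := by
        have : Filter.Tendsto (fun n => A (x n) - A p) Filter.atTop (nhds 0) := by
          simpa using ((A.continuous.tendsto p).comp hxp).sub_const (A p)
        simpa using (this.norm.const_mul C)
      have : ‖p - u‖ ≤ 0 := le_of_tendsto_of_tendsto' ht1 ht2 hle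
      have hpu : p = u := by
        have := le_antisymm this (norm_nonneg _)
        rwa [norm_eq_zero, sub_eq_zero] at this
      rw [hpu]; exact hu
    refine ⟨?_, U, hUclosed, hinf, hsup⟩
    -- range closed
    apply IsSeqClosed.isClosed
    intro y q hy hyq
    choose x hx using hy
    have hu : ∀ n, ∃ u ∈ U, A u = y n := by
      intro n
      obtain ⟨k, hk, u, hu, hku⟩ := hdecomp (x n)
      refine ⟨u, hu, ?_⟩
      have hAk : A k = 0 := hk
      rw [← hx n, ← hku, map_add, ContinuousLinearMap.coe_coe, hAk, zero_add]
    choose u huU hAu using hu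
    have hcauchy : CauchySeq u := by
      rw [Metric.cauchySeq_iff]
      intro ε hε
      have hyC : CauchySeq y := hyq.cauchySeq
      rw [Metric.cauchySeq_iff] at hyC
      obtain ⟨N, hN⟩ := hyC (ε / (C + 1)) (by positivity)
      refine ⟨N, fun m hm n hn => ?_⟩
      have h1 : ‖u m - u n‖ ≤ C * ‖y m - y n‖ := by
        have := hbound (u m - u n) (sub_mem (huU m) (huU n))
        simpa [map_sub, hAu] using this
      have h2 : dist (y m) (y n) < ε / (C + 1) := hN m hm n hn
      rw [dist_eq_norm] at h2 ⊢
      calc ‖u m - u n‖ ≤ C * ‖y m - y n‖ := h1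
        _ ≤ (C + 1) * ‖y m - y n‖ := by nlinarith [norm_nonneg (y m - y n)]
        _ < (C + 1) * (ε / (C + 1)) := by
            apply mul_lt_mul_of_pos_left h2; positivity
        _ = ε := by field_simp
    obtain ⟨p, hp⟩ := cauchySeq_tendsto_of_complete hcauchy
    have hAp : Filter.Tendsto (fun n => A (u n)) Filter.atTop (nhds (A p)) :=
      (A.continuous.tendsto p).comp hp
    have : Filter.Tendsto y Filter.atTop (nhds (A p)) := by
      simpa [hAu] using hAp
    have hq : q = A p := tendsto_nhds_unique hyq this
    exact ⟨p, hq.symm⟩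
end

section
/- Let X and Y be Banach spaces and A : X → Y a bounded linear operator. If A is well-posed (R(A) is closed in Y and N(A) is complemented in X) and strictly singular, then R(A) is finite-dimensional and A is compact. Conversely, if R(A) is finite-dimensional, then A is well-posed and strictly singular. -/
/-- If `A` is well-posed (closed range, complemented kernel) and strictly singular, then
`R(A)` is finite dimensional and `A` is compact. Conversely, if `R(A)` is finite
dimensional, then `A` is well-posed and strictly singular. -/
theorem stmt_10
    {X Y : Type*} [NormedAddCommGroup X] [NormedSpace ℝ X] [CompleteSpace X]
    [NormedAddCommGroup Y] [NormedSpace ℝ Y] [CompleteSpace Y]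
    (A : X →L[ℝ] Y) :
    ((IsClosed ((LinearMap.range (A : X →ₗ[ℝ] Y) : Submodule ℝ Y) : Set Y) ∧
        (∃ U : Submodule ℝ X, IsClosed (U : Set X) ∧
          LinearMap.ker (A : X →ₗ[ℝ] Y) ⊓ U = ⊥ ∧ LinearMap.ker (A : X →ₗ[ℝ] Y) ⊔ U = ⊤)) →
      (∀ M : Submodule ℝ X, (∃ c > 0, ∀ x ∈ M, c * ‖x‖ ≤ ‖A x‖) → FiniteDimensional ℝ M) →
      (FiniteDimensional ℝ (LinearMap.range (A : X →ₗ[ℝ] Y)) ∧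
        IsCompact (closure (⇑A '' Metric.closedBall 0 1)))) ∧
    (FiniteDimensional ℝ (LinearMap.range (A : X →ₗ[ℝ] Y)) →
      ((IsClosed ((LinearMap.range (A : X →ₗ[ℝ] Y) : Submodule ℝ Y) : Set Y) ∧
        (∃ U : Submodule ℝ X, IsClosed (U : Set X) ∧
          LinearMap.ker (A : X →ₗ[ℝ] Y) ⊓ U = ⊥ ∧ LinearMap.ker (A : X →ₗ[ℝ] Y) ⊔ U = ⊤)) ∧
       (∀ M : Submodule ℝ X, (∃ c > 0, ∀ x ∈ M, c * ‖x‖ ≤ ‖A x‖) → FiniteDimensional ℝ M))) := by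
  -- strict singularity follows from finite-dimensional range
  have ss_of_fd : FiniteDimensional ℝ (LinearMap.range (A : X →ₗ[ℝ] Y)) →
      (∀ M : Submodule ℝ X, (∃ c > 0, ∀ x ∈ M, c * ‖x‖ ≤ ‖A x‖) → FiniteDimensional ℝ M) := by
    intro hfd M hM
    obtain ⟨c, hc, hbound⟩ := hM
    let f : M →ₗ[ℝ] LinearMap.range (A : X →ₗ[ℝ] Y) :=
      LinearMap.codRestrict (LinearMap.range (A : X →ₗ[ℝ] Y)) ((A : X →ₗ[ℝ] Y).domRestrict M)
        (fun x => ⟨(x : X), rfl⟩)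
    have hinj : Function.Injective f := by
      intro x y hxy
      have hAxy : A ((x : X) - (y : X)) = 0 := by
        have := congrArg (Subtype.val) hxy
        simp only [f, LinearMap.codRestrict_apply, LinearMap.domRestrict_apply] at this
        rw [map_sub, sub_eq_zero]
        exact this
      have h1 : c * ‖(x : X) - (y : X)‖ ≤ 0 := by
        have := hbound ((x : X) - (y : X)) (M.sub_mem x.2 y.2)
        rw [hAxy, norm_zero] at this
        exact this
      have h2 : ‖(x : X) - (y : X)‖ = 0 := le_antisymm (nonpos_of_mul_nonpos_right h1 hc |>.trans (le_refl _)) (norm_nonneg _)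
      have : (x : X) = y := by
        have := sub_eq_zero.mp (norm_eq_zero.mp h2)
        exact this
      exact Subtype.ext this
    exact Module.Finite.of_injective f hinj
  constructor
  · -- forward direction
    rintro ⟨hclosed, U, hUc, hinf, hsup⟩ hss
    have hcompl : IsCompl (LinearMap.ker (A : X →ₗ[ℝ] Y)) U := ⟨disjoint_iff.2 hinf, codisjoint_iff.2 hsup⟩
    haveI : CompleteSpace U := hUc.completeSpace_coe
    haveI : CompleteSpace (LinearMap.range (A : X →ₗ[ℝ] Y)) := hclosed.completeSpace_coe
    let B : U →L[ℝ] LinearMap.range (A : X →ₗ[ℝ] Y) :=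
      (A.comp U.subtypeL).codRestrict (LinearMap.range (A : X →ₗ[ℝ] Y))
        (fun x => ⟨x.val, rfl⟩)
    have hBapp : ∀ u : U, (B u : Y) = A u.val := fun u => rfl
    have hker : LinearMap.ker (B : U →ₗ[ℝ] LinearMap.range (A : X →ₗ[ℝ] Y)) = ⊥ := by
      rw [LinearMap.ker_eq_bot']
      intro u hu
      have hAu : A (u : X) = 0 := by
        have := congrArg Subtype.val hu
        simpa [hBapp] using this
      have : (u : X) ∈ LinearMap.ker (A : X →ₗ[ℝ] Y) ⊓ U := ⟨hAu, u.2⟩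
      rw [hinf] at this
      exact Subtype.ext this
    have hrange : LinearMap.range (B : U →ₗ[ℝ] LinearMap.range (A : X →ₗ[ℝ] Y)) = ⊤ := by
      rw [LinearMap.range_eq_top]
      rintro ⟨y, x, rfl⟩
      have hx : x ∈ LinearMap.ker (A : X →ₗ[ℝ] Y) ⊔ U := hsup ▸ Submodule.mem_top
      obtain ⟨k, hk, u, hu, rfl⟩ := Submodule.mem_sup.mp hx
      refine ⟨⟨u, hu⟩, ?_⟩
      apply Subtype.ext
      have hAk : A k = 0 := hk
      simp [hBapp, map_add, hAk]
    let e := ContinuousLinearEquiv.ofBijective B hker hrange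
    set C : ℝ := ‖(e.symm : ↥(LinearMap.range (A : X →ₗ[ℝ] Y)) →L[ℝ] ↥U)‖ with hC
    have hCnn : 0 ≤ C := norm_nonneg _
    have hUfd : FiniteDimensional ℝ U := by
      apply hss U
      refine ⟨(C + 1)⁻¹, by positivity, ?_⟩
      intro x hx
      set u : U := ⟨x, hx⟩
      have h1 : ‖u‖ ≤ C * ‖e u‖ := by
        have := (e.symm : ↥(LinearMap.range (A : X →ₗ[ℝ] Y)) →L[ℝ] ↥U).le_opNorm (e u)
        simpa using this
      have h2 : ‖e u‖ = ‖A x‖ := by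
        have : ((e u : LinearMap.range (A : X →ₗ[ℝ] Y)) : Y) = A x := rfl
        rw [← this]; rfl
      rw [h2] at h1
      have hnormu : ‖u‖ = ‖x‖ := rfl
      rw [hnormu] at h1
      have hAx : 0 ≤ ‖A x‖ := norm_nonneg _
      rw [inv_mul_le_iff₀ (by positivity)]
      nlinarith
    have hmap : Submodule.map (A : X →ₗ[ℝ] Y) U = LinearMap.range (A : X →ₗ[ℝ] Y) := by
      apply le_antisymm
      · rintro _ ⟨x, _, rfl⟩; exact LinearMap.mem_range_self _ _
      · rintro _ ⟨x, rfl⟩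
        have hx : x ∈ LinearMap.ker (A : X →ₗ[ℝ] Y) ⊔ U := hsup ▸ Submodule.mem_top
        obtain ⟨k, hk, u, hu, rfl⟩ := Submodule.mem_sup.mp hx
        have hAk : A k = 0 := hk
        exact ⟨u, hu, by simp [map_add, hAk]⟩
    have hfd : FiniteDimensional ℝ (LinearMap.range (A : X →ₗ[ℝ] Y)) := by
      have : FiniteDimensional ℝ (Submodule.map (A : X →ₗ[ℝ] Y) U) := inferInstance
      rwa [hmap] at this
    refine ⟨hfd, ?_⟩
    -- compactness of closure of image of closed ball
    have himbd : Bornology.IsBounded (⇑A '' Metric.closedBall 0 1) :=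
      A.lipschitz.isBounded_image Metric.isBounded_closedBall
    have hclbd : Bornology.IsBounded (closure (⇑A '' Metric.closedBall 0 1)) :=
      himbd.closure
    have hsub : closure (⇑A '' Metric.closedBall 0 1) ⊆ (LinearMap.range (A : X →ₗ[ℝ] Y) : Set Y) := by
      apply closure_minimal _ hclosed
      rintro _ ⟨x, _, rfl⟩
      exact LinearMap.mem_range_self _ _
    haveI : ProperSpace (LinearMap.range (A : X →ₗ[ℝ] Y)) := FiniteDimensional.proper ℝ _
    set S := closure (⇑A '' Metric.closedBall 0 1)
    set t : Set (LinearMap.range (A : X →ₗ[ℝ] Y)) := Subtype.val ⁻¹' S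
    have htc : IsClosed t := isClosed_closure.preimage continuous_subtype_val
    have htb : Bornology.IsBounded t := by
      obtain ⟨R, hR⟩ := hclbd.subset_closedBall 0
      apply Metric.isBounded_closedBall.subset (s := t) (t := Metric.closedBall (0 : LinearMap.range (A : X →ₗ[ℝ] Y)) R)
      intro z hz
      have := hR hz
      simp only [Metric.mem_closedBall] at this ⊢
      simpa [Subtype.dist_eq] using this
    have htcomp : IsCompact t := Metric.isCompact_of_isClosed_isBounded htc htb
    have : Subtype.val '' t = S := by
      rw [Set.image_preimage_eq_inter_range, Subtype.range_coe]
      exact Set.inter_eq_left.mpr hsub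
    rw [← this]
    exact htcomp.image continuous_subtype_val
  · -- converse direction
    intro hfd
    refine ⟨⟨?_, ?_⟩, ss_of_fd hfd⟩
    · exact (LinearMap.range (A : X →ₗ[ℝ] Y)).closed_of_finiteDimensional
    · obtain ⟨U, hU⟩ := Submodule.exists_isCompl (LinearMap.ker (A : X →ₗ[ℝ] Y))
      have hUfd : FiniteDimensional ℝ U := by
        have e1 : (X ⧸ LinearMap.ker (A : X →ₗ[ℝ] Y)) ≃ₗ[ℝ] U :=
          (LinearMap.ker (A : X →ₗ[ℝ] Y)).quotientEquivOfIsCompl U hU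
        have e2 : (X ⧸ LinearMap.ker (A : X →ₗ[ℝ] Y)) ≃ₗ[ℝ] LinearMap.range (A : X →ₗ[ℝ] Y) :=
          (A : X →ₗ[ℝ] Y).quotKerEquivRange
        haveI : Module.Finite ℝ (LinearMap.range (A : X →ₗ[ℝ] Y)) := hfd
        exact Module.Finite.equiv (e2.symm.trans e1)
      exact ⟨U, U.closed_of_finiteDimensional, hU.inf_eq_bot, hU.sup_eq_top⟩
end

section
/- Let X and Y be Banach spaces and A : X → Y a bounded linear operator that is ill-posed, i.e., it is not the case that R(A) is closed in Y and N(A) is complemented in X. Then A is ill-posed of type II (there is no infinite-dimensional closed subspace M of Y contained in R(A) such that N(A) is complemented in the closed subspace A⁻¹[M] of X) if and only if A is strictly singular. -/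
/-- An ill-posed bounded linear operator `A : X → Y` (not both: closed range and
complemented kernel) is ill-posed of type II — i.e. there is no infinite-dimensional
closed subspace `M ⊆ R(A)` of `Y` such that `N(A)` is complemented in `A⁻¹[M]` — if and
only if `A` is strictly singular. -/
theorem stmt_11
    {X Y : Type*} [NormedAddCommGroup X] [NormedSpace ℝ X] [CompleteSpace X]
    [NormedAddCommGroup Y] [NormedSpace ℝ Y] [CompleteSpace Y]
    (A : X →L[ℝ] Y)
    (hill : ¬ (IsClosed ((LinearMap.range (A : X →ₗ[ℝ] Y) : Submodule ℝ Y) : Set Y) ∧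
      ∃ U : Submodule ℝ X, IsClosed (U : Set X) ∧
        LinearMap.ker (A : X →ₗ[ℝ] Y) ⊓ U = ⊥ ∧ LinearMap.ker (A : X →ₗ[ℝ] Y) ⊔ U = ⊤)) :
    (¬ ∃ M : Submodule ℝ Y, IsClosed (M : Set Y) ∧ ¬ FiniteDimensional ℝ M ∧
        M ≤ LinearMap.range (A : X →ₗ[ℝ] Y) ∧
        ∃ V : Submodule ℝ X, IsClosed (V : Set X) ∧ V ≤ Submodule.comap (A : X →ₗ[ℝ] Y) M ∧
          LinearMap.ker (A : X →ₗ[ℝ] Y) ⊓ V = ⊥ ∧ LinearMap.ker (A : X →ₗ[ℝ] Y) ⊔ V = Submodule.comap (A : X →ₗ[ℝ] Y) M) ↔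
    (∀ M : Submodule ℝ X, (∃ c > 0, ∀ x ∈ M, c * ‖x‖ ≤ ‖A x‖) → FiniteDimensional ℝ M) := by
  constructor
  · rintro hno M₀ ⟨c, hc, hbound⟩
    by_contra hinf
    apply hno
    set V := M₀.topologicalClosure with hVdef
    have hVc : IsClosed (V : Set X) := Submodule.isClosed_topologicalClosure _
    have hbV : ∀ x ∈ V, c * ‖x‖ ≤ ‖A x‖ := by
      have hS : IsClosed {x : X | c * ‖x‖ ≤ ‖A x‖} :=
        isClosed_le (by fun_prop) (by fun_prop)
      intro x hx
      have hsub : (V : Set X) ⊆ {x : X | c * ‖x‖ ≤ ‖A x‖} := by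
        rw [hVdef, Submodule.topologicalClosure_coe]
        exact closure_minimal (fun y hy => hbound y hy) hS
      exact hsub hx
    haveI : CompleteSpace V := hVc.completeSpace_coe
    have hanti : AntilipschitzWith (c⁻¹).toNNReal (A.comp V.subtypeL) := by
      apply AddMonoidHomClass.antilipschitz_of_bound
      intro v
      rw [Real.coe_toNNReal _ (le_of_lt (inv_pos.mpr hc))]
      have h1 : c * ‖(v : X)‖ ≤ ‖A v‖ := hbV v v.2
      have : ‖(v : X)‖ ≤ c⁻¹ * ‖A (v : X)‖ := by
        rw [le_inv_mul_iff₀ hc]; exact h1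
      simpa using this
    have hrangeclosed : IsClosed (Set.range (A.comp V.subtypeL)) :=
      hanti.isClosed_range (A.comp V.subtypeL).uniformContinuous
    have hMset : ((Submodule.map (A : X →ₗ[ℝ] Y) V : Submodule ℝ Y) : Set Y)
        = Set.range (A.comp V.subtypeL) := by
      ext y
      simp [Submodule.mem_map, Set.range, SetLike.exists]
    -- injectivity on V
    have hinj : ∀ x ∈ V, A x = 0 → x = 0 := by
      intro x hx hx0
      have h := hbV x hx
      rw [hx0, norm_zero] at h
      have h2 : ‖x‖ ≤ 0 := by nlinarith
      exact norm_le_zero_iff.mp h2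
    refine ⟨Submodule.map (A : X →ₗ[ℝ] Y) V, by rw [hMset]; exact hrangeclosed, ?_, ?_, V, hVc, ?_, ?_, ?_⟩
    · -- not finite dimensional
      intro hfd
      have hVinf : ¬ FiniteDimensional ℝ V := by
        intro hfdV
        exact hinf (Submodule.finiteDimensional_of_le (M₀.le_topologicalClosure))
      apply hVinf
      let φ : V →ₗ[ℝ] Submodule.map (A : X →ₗ[ℝ] Y) V :=
        LinearMap.codRestrict _ ((A : X →ₗ[ℝ] Y).comp V.subtype)
          (fun v => Submodule.mem_map_of_mem v.2)
      have hφinj : Function.Injective φ := by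
        intro a b hab
        have : A (a : X) = A (b : X) := congrArg Subtype.val hab
        have h0 : A ((a : X) - (b : X)) = 0 := by
          rw [map_sub, this, sub_self]
        have := hinj _ (V.sub_mem a.2 b.2) h0
        exact Subtype.ext (sub_eq_zero.mp this)
      exact FiniteDimensional.of_injective φ hφinj
    · -- map A V ≤ range A
      rintro y ⟨x, _, rfl⟩
      exact ⟨x, rfl⟩
    · -- V ≤ comap A (map A V)
      intro x hx
      exact Submodule.mem_map_of_mem hx
    · -- ker ⊓ V = ⊥
      rw [eq_bot_iff]
      rintro x ⟨hxk, hxV⟩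
      exact hinj x hxV hxk
    · -- ker ⊔ V = comap A (map A V)
      rw [show Submodule.comap (A : X →ₗ[ℝ] Y) (Submodule.map (A : X →ₗ[ℝ] Y) V)
            = Submodule.comap (A : X →ₗ[ℝ] Y) (Submodule.map (A : X →ₗ[ℝ] Y) V) from rfl,
          Submodule.comap_map_eq]
      exact sup_comm _ _
  · rintro hss ⟨M, hMc, hMinf, hMle, V, hVc, hVle, hker, hsup⟩
    haveI : CompleteSpace M := hMc.completeSpace_coe
    haveI : CompleteSpace V := hVc.completeSpace_coe
    -- M = map A V
    have hmap : Submodule.map (A : X →ₗ[ℝ] Y) V = M := by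
      have h1 : Submodule.map (A : X →ₗ[ℝ] Y) (LinearMap.ker (A : X →ₗ[ℝ] Y) ⊔ V) = Submodule.map (A : X →ₗ[ℝ] Y) V := by
        have hk : Submodule.map (A : X →ₗ[ℝ] Y) (LinearMap.ker (A : X →ₗ[ℝ] Y)) = ⊥ := by
          rw [eq_bot_iff]; rintro y ⟨x, hx, rfl⟩; exact hx
        rw [Submodule.map_sup, hk, bot_sup_eq]
      have h2 : Submodule.map (A : X →ₗ[ℝ] Y) (Submodule.comap (A : X →ₗ[ℝ] Y) M) = M := by
        rw [show Submodule.map (A : X →ₗ[ℝ] Y) (Submodule.comap (A : X →ₗ[ℝ] Y) M)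
              = Submodule.map (A : X →ₗ[ℝ] Y) (Submodule.comap (A : X →ₗ[ℝ] Y) M) from rfl,
            Submodule.map_comap_eq]
        exact inf_eq_right.mpr hMle
      rw [← h1, hsup, h2]
    -- the restriction as a continuous linear map V →L M
    let f : V →L[ℝ] M := ContinuousLinearMap.codRestrict (A.comp V.subtypeL) M
      (fun v => hVle v.2)
    have hfker : LinearMap.ker (f : V →ₗ[ℝ] M) = ⊥ := by
      rw [eq_bot_iff]
      rintro v hv
      have hAv : A (v : X) = 0 := congrArg Subtype.val (hv : f v = 0)
      have : (v : X) ∈ LinearMap.ker (A : X →ₗ[ℝ] Y) ⊓ V := ⟨hAv, v.2⟩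
      rw [hker] at this
      exact Subtype.ext this
    have hfsurj : LinearMap.range (f : V →ₗ[ℝ] M) = ⊤ := by
      rw [eq_top_iff]
      rintro ⟨m, hm⟩ _
      rw [← hmap] at hm
      obtain ⟨x, hxV, hxm⟩ := hm
      exact ⟨⟨x, hxV⟩, Subtype.ext hxm⟩
    let e := ContinuousLinearEquiv.ofBijective f hfker hfsurj
    set K := ‖(e.symm : M →L[ℝ] V)‖ with hK
    have hK0 : 0 ≤ K := norm_nonneg _
    have hbd : ∀ x ∈ V, (K + 1)⁻¹ * ‖x‖ ≤ ‖A x‖ := by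
      intro x hx
      set v : V := ⟨x, hx⟩
      have h1 : ‖v‖ ≤ K * ‖e v‖ := by
        calc ‖v‖ = ‖e.symm (e v)‖ := by rw [e.symm_apply_apply]
          _ ≤ K * ‖e v‖ := (e.symm : M →L[ℝ] V).le_opNorm _
      have hev : ‖e v‖ = ‖A x‖ := by
        have : ((e v : M) : Y) = A x := rfl
        rw [show ‖e v‖ = ‖((e v : M) : Y)‖ from rfl, this]
      have hvx : ‖v‖ = ‖x‖ := rfl
      rw [hev, hvx] at h1
      rw [inv_mul_le_iff₀ (by linarith)]
      calc ‖x‖ ≤ K * ‖A x‖ := h1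
        _ ≤ (K + 1) * ‖A x‖ := by nlinarith [norm_nonneg (A x)]
    haveI hVfd : FiniteDimensional ℝ V :=
      hss V ⟨(K + 1)⁻¹, by positivity, hbd⟩
    exact hMinf (Module.Finite.of_surjective (f : V →ₗ[ℝ] M)
      (LinearMap.range_eq_top.mp hfsurj))
end

section
/- Let X and Y be Banach spaces and A : X → Y a bounded linear operator of hybrid type, i.e., A is strictly singular and its range R(A) contains an infinite-dimensional closed subspace of Y. Then A is not compact and its kernel N(A) is not complemented in X. -/
/-- A hybrid-type operator — strictly singular with range containing an
infinite-dimensional closed subspace — is not compact and its kernel is not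
complemented. -/
theorem stmt_12
    {X Y : Type*} [NormedAddCommGroup X] [NormedSpace ℝ X] [CompleteSpace X]
    [NormedAddCommGroup Y] [NormedSpace ℝ Y] [CompleteSpace Y]
    (A : X →L[ℝ] Y)
    (hss : ∀ M : Submodule ℝ X, (∃ c > 0, ∀ x ∈ M, c * ‖x‖ ≤ ‖A x‖) → FiniteDimensional ℝ M)
    (hM : ∃ M : Submodule ℝ Y, IsClosed (M : Set Y) ∧ ¬ FiniteDimensional ℝ M ∧
      M ≤ LinearMap.range (A : X →ₗ[ℝ] Y)) :
    ¬ IsCompact (closure (⇑A '' Metric.closedBall 0 1)) ∧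
    ¬ ∃ U : Submodule ℝ X, IsClosed (U : Set X) ∧
      LinearMap.ker (A : X →ₗ[ℝ] Y) ⊓ U = ⊥ ∧ LinearMap.ker (A : X →ₗ[ℝ] Y) ⊔ U = ⊤ := by
  obtain ⟨M, hMc, hMfd, hMr⟩ := hM
  haveI : CompleteSpace M := hMc.completeSpace_coe
  constructor
  · intro hK
    -- restrict A to the preimage of M
    set N : Submodule ℝ X := Submodule.comap (A : X →ₗ[ℝ] Y) M with hNdef
    have hNc : IsClosed (N : Set X) := hMc.preimage A.continuous
    haveI : CompleteSpace N := hNc.completeSpace_coe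
    let B : N →L[ℝ] M := (A.comp N.subtypeL).codRestrict M (fun n => n.2)
    have hBsurj : Function.Surjective B := by
      rintro ⟨m, hm⟩
      obtain ⟨x, hx⟩ := hMr hm
      refine ⟨⟨x, ?_⟩, Subtype.ext (by exact hx)⟩
      simp [hNdef, Submodule.mem_comap, hx, hm]
    have hopen := B.isOpenMap hBsurj
    have h0 : (0 : M) ∈ B '' Metric.ball 0 1 :=
      ⟨0, by simp, by simp⟩
    obtain ⟨δ, hδ, hball⟩ := Metric.isOpen_iff.mp (hopen _ Metric.isOpen_ball) 0 h0
    have hsub : ((↑) '' Metric.closedBall (0:M) (δ/2) : Set Y) ⊆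
        closure (⇑A '' Metric.closedBall 0 1) := by
      rintro y ⟨m, hm, rfl⟩
      have hmb : m ∈ Metric.ball (0:M) δ := by
        rw [Metric.mem_closedBall] at hm
        rw [Metric.mem_ball]
        exact lt_of_le_of_lt hm (by linarith)
      obtain ⟨n, hn, hbn⟩ := hball hmb
      refine subset_closure ⟨(n : X), ?_, ?_⟩
      · rw [Metric.mem_ball, dist_zero_right] at hn
        rw [Metric.mem_closedBall, dist_zero_right]
        exact le_of_lt (by simpa using hn)
      · have := congrArg Subtype.val hbn
        exact this
    have himeq : ((↑) '' Metric.closedBall (0:M) (δ/2) : Set Y) =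
        (M : Set Y) ∩ Metric.closedBall 0 (δ/2) := by
      ext y
      constructor
      · rintro ⟨m, hm, rfl⟩
        refine ⟨m.2, ?_⟩
        rw [Metric.mem_closedBall, dist_zero_right] at hm ⊢
        simpa using hm
      · rintro ⟨hy, hyb⟩
        refine ⟨⟨y, hy⟩, ?_, rfl⟩
        rw [Metric.mem_closedBall, dist_zero_right] at hyb ⊢
        simpa using hyb
    have hclosed : IsClosed ((M : Set Y) ∩ Metric.closedBall 0 (δ/2)) :=
      hMc.inter Metric.isClosed_closedBall
    have hcptY : IsCompact ((↑) '' Metric.closedBall (0:M) (δ/2) : Set Y) := by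
      rw [himeq]
      exact hK.of_isClosed_subset hclosed (himeq ▸ hsub)
    have hcptM : IsCompact (Metric.closedBall (0:M) (δ/2)) :=
      Subtype.isCompact_iff.mpr hcptY
    exact hMfd (FiniteDimensional.of_isCompact_closedBall₀ ℝ (by linarith) hcptM)
  · rintro ⟨U, hUc, hinf, hsup⟩
    set N : Submodule ℝ X := U ⊓ Submodule.comap (A : X →ₗ[ℝ] Y) M with hNdef
    have hNc : IsClosed (N : Set X) := hUc.inter (hMc.preimage A.continuous)
    haveI : CompleteSpace N := hNc.completeSpace_coe
    let B : N →L[ℝ] M := (A.comp N.subtypeL).codRestrict M (fun n => n.2.2)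
    have hBinj : LinearMap.ker (B : N →ₗ[ℝ] M) = ⊥ := by
      rw [LinearMap.ker_eq_bot']
      rintro ⟨n, hnU, hnM⟩ h
      have hA : A n = 0 := by
        have := congrArg Subtype.val h
        exact this
      have : n ∈ LinearMap.ker (A : X →ₗ[ℝ] Y) ⊓ U := ⟨hA, hnU⟩
      rw [hinf] at this
      exact Subtype.ext (by simpa using this)
    have hBsurj : LinearMap.range (B : N →ₗ[ℝ] M) = ⊤ := by
      rw [LinearMap.range_eq_top]
      rintro ⟨m, hm⟩
      obtain ⟨x, hx⟩ := hMr hm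
      have hxmem : x ∈ LinearMap.ker (A : X →ₗ[ℝ] Y) ⊔ U := hsup ▸ Submodule.mem_top
      obtain ⟨k, hk, u, hu, hku⟩ := Submodule.mem_sup.mp hxmem
      have hAu : A u = m := by
        have : A x = m := hx
        rw [← hku] at this
        simpa [show A k = 0 from LinearMap.mem_ker.mp hk] using this
      refine ⟨⟨u, hu, ?_⟩, Subtype.ext (by exact hAu)⟩
      simp [Submodule.mem_comap, hAu, hm]
    let e := ContinuousLinearEquiv.ofBijective B hBinj hBsurj
    obtain ⟨K, hKa⟩ : ∃ K : NNReal, AntilipschitzWith K B := ⟨_, e.antilipschitz⟩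
    have hfd : FiniteDimensional ℝ N := by
      apply hss
      refine ⟨((K : ℝ) + 1)⁻¹, by positivity, fun x hx => ?_⟩
      have hb := hKa.le_mul_dist ⟨x, hx⟩ 0
      simp only [dist_zero_right, map_zero] at hb
      have hnx : ‖(⟨x, hx⟩ : N)‖ = ‖x‖ := rfl
      have hbx : ‖B ⟨x, hx⟩‖ = ‖A x‖ := rfl
      rw [hnx, hbx] at hb
      rw [inv_mul_le_iff₀ (by positivity)]
      calc ‖x‖ ≤ K * ‖A x‖ := hb
        _ ≤ (K + 1) * ‖A x‖ := by nlinarith [norm_nonneg (A x)]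
    exact hMfd ((e.toLinearEquiv.finiteDimensional))
end

section
/- Let X and Y be Banach spaces and A : X → Y a bounded linear operator. Then R(A) is closed in Y, N(A) is complemented in X, and R(A) is complemented in Y if and only if there exists a bounded linear operator B : Y → X such that A(B(A x)) = A x for all x ∈ X. -/
/-- `R(A)` closed, `N(A)` complemented in `X`, and `R(A)` complemented in `Y` if and only
if `A` has a bounded linear inner inverse `B : Y → X`, i.e. `A B A = A`. -/
theorem stmt_14
    {X Y : Type*} [NormedAddCommGroup X] [NormedSpace ℝ X] [CompleteSpace X]
    [NormedAddCommGroup Y] [NormedSpace ℝ Y] [CompleteSpace Y]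
    (A : X →L[ℝ] Y) :
    (IsClosed ((LinearMap.range (A : X →ₗ[ℝ] Y) : Submodule ℝ Y) : Set Y) ∧
      (∃ U : Submodule ℝ X, IsClosed (U : Set X) ∧
        LinearMap.ker (A : X →ₗ[ℝ] Y) ⊓ U = ⊥ ∧ LinearMap.ker (A : X →ₗ[ℝ] Y) ⊔ U = ⊤) ∧
      (∃ V : Submodule ℝ Y, IsClosed (V : Set Y) ∧
        LinearMap.range (A : X →ₗ[ℝ] Y) ⊓ V = ⊥ ∧ LinearMap.range (A : X →ₗ[ℝ] Y) ⊔ V = ⊤)) ↔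
    ∃ B : Y →L[ℝ] X, ∀ x : X, A (B (A x)) = A x := by
  constructor
  · rintro ⟨hR, ⟨U, hU, hU1, hU2⟩, ⟨V, hV, hV1, hV2⟩⟩
    have hker : IsClosed ((LinearMap.ker (A : X →ₗ[ℝ] Y) : Submodule ℝ X) : Set X) :=
      ContinuousLinearMap.isClosed_ker A
    have hcU : IsCompl U (LinearMap.ker (A : X →ₗ[ℝ] Y)) :=
      ⟨disjoint_iff.2 (by rw [inf_comm]; exact hU1),
       codisjoint_iff.2 (by rw [sup_comm]; exact hU2)⟩
    have hcV : IsCompl (LinearMap.range (A : X →ₗ[ℝ] Y)) V :=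
      ⟨disjoint_iff.2 hV1, codisjoint_iff.2 hV2⟩
    haveI : CompleteSpace U := hU.completeSpace_coe
    haveI : CompleteSpace (LinearMap.range (A : X →ₗ[ℝ] Y)) := hR.completeSpace_coe
    -- projection of Y onto range A along V
    let πR : Y →L[ℝ] (LinearMap.range (A : X →ₗ[ℝ] Y)) :=
      (LinearMap.range (A : X →ₗ[ℝ] Y)).linearProjOfClosedCompl V hcV hR hV
    -- A restricted to U, as a map into range A
    let e : U →L[ℝ] (LinearMap.range (A : X →ₗ[ℝ] Y)) :=
      (A.comp U.subtypeL).codRestrict (LinearMap.range (A : X →ₗ[ℝ] Y))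
        (fun u => LinearMap.mem_range_self _ _)
    have hinj : LinearMap.ker (e : U →ₗ[ℝ] (LinearMap.range (A : X →ₗ[ℝ] Y))) = ⊥ := by
      rw [LinearMap.ker_eq_bot']
      intro u hu
      have hAu : (u : X) ∈ LinearMap.ker (A : X →ₗ[ℝ] Y) := by
        have := congrArg (Subtype.val) hu
        exact LinearMap.mem_ker.2 this
      have : (u : X) ∈ LinearMap.ker (A : X →ₗ[ℝ] Y) ⊓ U := ⟨hAu, u.2⟩
      rw [hU1] at this
      exact Subtype.ext (by simpa using this)
    have hsurj : LinearMap.range (e : U →ₗ[ℝ] (LinearMap.range (A : X →ₗ[ℝ] Y))) = ⊤ := by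
      rw [LinearMap.range_eq_top]
      rintro ⟨y, x, rfl⟩
      have hx : x ∈ LinearMap.ker (A : X →ₗ[ℝ] Y) ⊔ U := hU2 ▸ Submodule.mem_top
      obtain ⟨k, hk, u, hu, rfl⟩ := Submodule.mem_sup.1 hx
      refine ⟨⟨u, hu⟩, ?_⟩
      apply Subtype.ext
      simp only [e, ContinuousLinearMap.coe_coe, ContinuousLinearMap.coe_codRestrict_apply,
        ContinuousLinearMap.coe_comp', Function.comp_apply,
        Submodule.coe_subtypeL', Submodule.coe_subtype]
      change A u = A (k + u)
      rw [map_add, show A k = 0 from LinearMap.mem_ker.1 hk, zero_add]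
    let E := ContinuousLinearEquiv.ofBijective e hinj hsurj
    refine ⟨U.subtypeL.comp ((E.symm : (LinearMap.range (A : X →ₗ[ℝ] Y)) →L[ℝ] U).comp πR), fun x => ?_⟩
    have hproj : πR (A x) = ⟨A x, LinearMap.mem_range_self _ _⟩ :=
      Submodule.linearProjOfIsCompl_apply_left hcV ⟨A x, LinearMap.mem_range_self _ _⟩
    simp only [ContinuousLinearMap.coe_comp', Function.comp_apply, hproj]
    have hE : ∀ z : LinearMap.range (A : X →ₗ[ℝ] Y), A ((E.symm z : U) : X) = (z : Y) := by
      intro z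
      exact congrArg Subtype.val (E.apply_symm_apply z)
    simpa using hE ⟨A x, LinearMap.mem_range_self _ _⟩
  · rintro ⟨B, hB⟩
    have hQQ : ∀ y : Y, A (B (A (B y))) = A (B y) := fun y => hB (B y)
    refine ⟨?_, ⟨LinearMap.range ((B.comp A : X →L[ℝ] X) : X →ₗ[ℝ] X), ?_, ?_, ?_⟩,
      ⟨LinearMap.ker ((A.comp B : Y →L[ℝ] Y) : Y →ₗ[ℝ] Y), ContinuousLinearMap.isClosed_ker _, ?_, ?_⟩⟩
    · -- range A closed
      have : ((LinearMap.range (A : X →ₗ[ℝ] Y) : Submodule ℝ Y) : Set Y) =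
          ((LinearMap.ker ((ContinuousLinearMap.id ℝ Y - A.comp B : Y →L[ℝ] Y) : Y →ₗ[ℝ] Y) : Submodule ℝ Y) : Set Y) := by
        ext y
        simp only [SetLike.mem_coe, LinearMap.mem_range, LinearMap.mem_ker, ContinuousLinearMap.coe_coe,
          ContinuousLinearMap.coe_sub', Pi.sub_apply, ContinuousLinearMap.coe_id', id_eq,
          ContinuousLinearMap.coe_comp', Function.comp_apply, sub_eq_zero]
        constructor
        · rintro ⟨x, rfl⟩; exact (hB x).symm
        · intro h; exact ⟨B y, h.symm⟩
      rw [this]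
      exact ContinuousLinearMap.isClosed_ker _
    · -- range (B∘A) closed
      have : ((LinearMap.range ((B.comp A : X →L[ℝ] X) : X →ₗ[ℝ] X) : Submodule ℝ X) : Set X) =
          ((LinearMap.ker ((ContinuousLinearMap.id ℝ X - B.comp A : X →L[ℝ] X) : X →ₗ[ℝ] X) : Submodule ℝ X) : Set X) := by
        ext x
        simp only [SetLike.mem_coe, LinearMap.mem_range, LinearMap.mem_ker, ContinuousLinearMap.coe_coe,
          ContinuousLinearMap.coe_sub', Pi.sub_apply, ContinuousLinearMap.coe_id', id_eq,
          ContinuousLinearMap.coe_comp', Function.comp_apply, sub_eq_zero]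
        constructor
        · rintro ⟨z, rfl⟩
          exact congrArg B (hB z) |>.symm
        · intro h; exact ⟨x, h.symm⟩
      rw [this]
      exact ContinuousLinearMap.isClosed_ker _
    · -- ker A ⊓ range (B∘A) = ⊥
      rw [eq_bot_iff]
      rintro x ⟨hx1, z, rfl⟩
      have hAx : A (B (A z)) = 0 := by simpa using hx1
      have : A z = 0 := by rw [← hB z]; exact hAx
      simp [this]
    · -- ker A ⊔ range (B∘A) = ⊤
      rw [eq_top_iff]
      intro x _
      have h1 : x - B (A x) ∈ LinearMap.ker (A : X →ₗ[ℝ] Y) := by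
        simp [LinearMap.mem_ker, map_sub, hB x]
      have h2 : B (A x) ∈ LinearMap.range ((B.comp A : X →L[ℝ] X) : X →ₗ[ℝ] X) := ⟨x, rfl⟩
      have := Submodule.add_mem_sup h1 h2
      simpa using this
    · -- range A ⊓ ker (A∘B) = ⊥
      rw [eq_bot_iff]
      rintro y ⟨⟨x, rfl⟩, hy2⟩
      have : A (B (A x)) = 0 := by simpa using hy2
      have : A x = 0 := by rw [← hB x]; exact this
      simp [this]
    · -- range A ⊔ ker (A∘B) = ⊤
      rw [eq_top_iff]
      intro y _
      have h1 : A (B y) ∈ LinearMap.range (A : X →ₗ[ℝ] Y) := LinearMap.mem_range_self _ _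
      have h2 : y - A (B y) ∈ LinearMap.ker ((A.comp B : Y →L[ℝ] Y) : Y →ₗ[ℝ] Y) := by
        simp [LinearMap.mem_ker, map_sub, hQQ y]
      have := Submodule.add_mem_sup h1 h2
      simpa using this
end

section
/- Let X and Y be Banach spaces and A : X → Y a bounded linear operator. Then R(A) is closed in Y and N(A) is complemented in X if and only if there exists a bounded linear operator B : R(A) → X such that A(B(A x)) = A x for all x ∈ X. -/
/-- `R(A)` closed and `N(A)` complemented in `X` if and only if `A` has a bounded linear
inner inverse defined on `R(A)`, i.e. `B : R(A) → X` with `A B A = A`. -/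
theorem stmt_15
    {X Y : Type*} [NormedAddCommGroup X] [NormedSpace ℝ X] [CompleteSpace X]
    [NormedAddCommGroup Y] [NormedSpace ℝ Y] [CompleteSpace Y]
    (A : X →L[ℝ] Y) :
    (IsClosed ((LinearMap.range (A : X →ₗ[ℝ] Y) : Submodule ℝ Y) : Set Y) ∧
      ∃ U : Submodule ℝ X, IsClosed (U : Set X) ∧
        LinearMap.ker (A : X →ₗ[ℝ] Y) ⊓ U = ⊥ ∧ LinearMap.ker (A : X →ₗ[ℝ] Y) ⊔ U = ⊤) ↔
    ∃ B : (LinearMap.range (A : X →ₗ[ℝ] Y) : Submodule ℝ Y) →L[ℝ] X,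
      ∀ x : X, A (B ⟨A x, LinearMap.mem_range_self (A : X →ₗ[ℝ] Y) x⟩) = A x := by
  constructor
  · rintro ⟨hclosed, U, hU, hinf, hsup⟩
    haveI : CompleteSpace U := hU.completeSpace_coe
    haveI : CompleteSpace (LinearMap.range (A : X →ₗ[ℝ] Y) : Submodule ℝ Y) := hclosed.completeSpace_coe
    set f : U →L[ℝ] (LinearMap.range (A : X →ₗ[ℝ] Y) : Submodule ℝ Y) :=
      (A.comp U.subtypeL).codRestrict _ (fun u => LinearMap.mem_range_self (A : X →ₗ[ℝ] Y) u.1) with hf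
    have hinj : f.ker = ⊥ := by
      rw [Submodule.eq_bot_iff]
      rintro ⟨u, hu⟩ hker
      have h1 : A u = 0 := by
        have := congrArg Subtype.val hker
        exact this
      have h2 : u ∈ LinearMap.ker (A : X →ₗ[ℝ] Y) ⊓ U := ⟨h1, hu⟩
      rw [hinf] at h2
      exact Subtype.ext (by simpa using h2)
    have hsurj : f.range = ⊤ := by
      rw [Submodule.eq_top_iff']
      rintro ⟨y, x, rfl⟩
      have hx : x ∈ LinearMap.ker (A : X →ₗ[ℝ] Y) ⊔ U := hsup ▸ Submodule.mem_top
      obtain ⟨n, hn, u, hu, rfl⟩ := Submodule.mem_sup.mp hx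
      have hn' : A n = 0 := hn
      refine ⟨⟨u, hu⟩, Subtype.ext ?_⟩
      simp [hf, hn']
      rfl
    let e := ContinuousLinearEquiv.ofBijective f hinj hsurj
    refine ⟨U.subtypeL.comp (e.symm : _ →L[ℝ] U), fun x => ?_⟩
    have h3 := e.apply_symm_apply ⟨A x, LinearMap.mem_range_self (A : X →ₗ[ℝ] Y) x⟩
    have h4 := congrArg Subtype.val h3
    exact h4
  · rintro ⟨B, hB⟩
    set Q : X →L[ℝ] X :=
      B.comp (A.codRestrict (LinearMap.range (A : X →ₗ[ℝ] Y)) (LinearMap.mem_range_self (A : X →ₗ[ℝ] Y))) with hQdef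
    have hQ : ∀ x, A (Q x) = A x := fun x => hB x
    have hQ0 : ∀ x, A x = 0 → Q x = 0 := by
      intro x hx
      have : (⟨A x, LinearMap.mem_range_self (A : X →ₗ[ℝ] Y) x⟩ : LinearMap.range (A : X →ₗ[ℝ] Y)) = 0 :=
        Subtype.ext hx
      have h5 : Q x = B ⟨A x, LinearMap.mem_range_self (A : X →ₗ[ℝ] Y) x⟩ := rfl
      rw [h5, this, map_zero]
    have hidem : ∀ x, Q (Q x) = Q x := by
      intro x
      show B _ = B _
      congr 1
      exact Subtype.ext (hQ x)
    constructor
    · apply IsSeqClosed.isClosed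
      intro g y hg hgy
      have hc : CauchySeq g := hgy.cauchySeq
      set gs : ℕ → (LinearMap.range (A : X →ₗ[ℝ] Y) : Submodule ℝ Y) := fun n => ⟨g n, hg n⟩ with hgs
      have hcs : CauchySeq gs := by
        rw [Metric.cauchySeq_iff] at hc ⊢
        simpa [hgs, Subtype.dist_eq] using hc
      have hBc : CauchySeq (fun n => B (gs n)) := hcs.map B.uniformContinuous
      obtain ⟨p, hp⟩ := cauchySeq_tendsto_of_complete hBc
      have hABg : ∀ n, A (B (gs n)) = g n := by
        intro n
        obtain ⟨x, hx⟩ := hg n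
        have : gs n = ⟨A x, LinearMap.mem_range_self (A : X →ₗ[ℝ] Y) x⟩ := Subtype.ext hx.symm
        rw [this, hB x]; exact hx
      have ht : Filter.Tendsto (fun n => A (B (gs n))) Filter.atTop (nhds (A p)) :=
        (A.continuous.tendsto p).comp hp
      have ht' : Filter.Tendsto g Filter.atTop (nhds (A p)) := by
        simpa [funext hABg] using ht
      exact ⟨p, tendsto_nhds_unique ht' hgy⟩
    · refine ⟨LinearMap.ker ((ContinuousLinearMap.id ℝ X - Q : X →L[ℝ] X) : X →ₗ[ℝ] X), ?_, ?_, ?_⟩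
      · exact ContinuousLinearMap.isClosed_ker _
      · rw [Submodule.eq_bot_iff]
        rintro x ⟨hx1, hx2⟩
        have hx1' : A x = 0 := hx1
        have hx2' : x - Q x = 0 := hx2
        have : Q x = x := (sub_eq_zero.mp hx2').symm
        rw [← this, hQ0 x hx1']
      · rw [Submodule.eq_top_iff']
        intro x
        refine Submodule.mem_sup.mpr ⟨x - Q x, ?_, Q x, ?_, by abel⟩
        · show A (x - Q x) = 0
          rw [map_sub, hQ x, sub_self]
        · show (ContinuousLinearMap.id ℝ X - Q) (Q x) = 0
          simp [hidem x]
end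

section
/- Let X and Y be Banach spaces and A : X → Y a bounded linear operator. Then R(A) is closed in Y if and only if there exists a continuous (not necessarily linear) map B from the closure of R(A) in Y to X such that A(B(A x)) = A x for all x ∈ X. -/
open Function Set Filter Topology

section BartleGraves

variable {E F : Type*} [NormedAddCommGroup E] [NormedSpace ℝ E] [CompleteSpace E]
  [NormedAddCommGroup F] [NormedSpace ℝ F] [CompleteSpace F]

/-- Approximate continuous section with linear norm control. -/
lemma bg_approx (T : E →L[ℝ] F) (hsurj : Function.Surjective T) :
    ∃ C : ℝ, 0 < C ∧ ∃ g : F → E, Continuous g ∧ (∀ y, ‖g y‖ ≤ C * ‖y‖) ∧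
      ∀ y, ‖T (g y) - y‖ ≤ (1 / 2) * ‖y‖ := by
  obtain ⟨C, hC0, hsec⟩ := T.exists_preimage_norm_le hsurj
  choose x hx1 hx2 using fun z : {y : F // y ≠ 0} => hsec (z : F)
  set U : {y : F // y ≠ 0} → Set {y : F // y ≠ 0} :=
    fun z => {w | ‖(w : F) - (z : F)‖ < ‖(z : F)‖ / 3} with hU
  have hUopen : ∀ z, IsOpen (U z) := fun z =>
    isOpen_lt ((continuous_subtype_val.sub continuous_const).norm) continuous_const
  have hUcov : (univ : Set {y : F // y ≠ 0}) ⊆ ⋃ z, U z := by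
    intro w _
    refine mem_iUnion.2 ⟨w, ?_⟩
    have : 0 < ‖(w : F)‖ := norm_pos_iff.2 w.2
    simp only [hU, mem_setOf_eq, sub_self, norm_zero]
    linarith
  obtain ⟨f, hf⟩ := PartitionOfUnity.exists_isSubordinate isClosed_univ U hUopen hUcov
  set g0 : {y : F // y ≠ 0} → E := fun w => ∑ᶠ z, f z w • x z with hg0
  have hg0cont : Continuous g0 :=
    f.continuous_finsum_smul (g := fun i _ => x i) (fun i y _ => continuousAt_const)
  have hbd : ∀ w : {y : F // y ≠ 0}, ∀ i ∈ f.finsupport w,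
      ‖(i : F)‖ ≤ 3 / 2 * ‖(w : F)‖ ∧ ‖(i : F) - (w : F)‖ ≤ 1 / 2 * ‖(w : F)‖ := by
    intro w i hi
    have hw : w ∈ U i := hf i (subset_closure ((f.mem_finsupport w).1 hi))
    have h1 : ‖(w : F) - (i : F)‖ < ‖(i : F)‖ / 3 := hw
    have h2 : ‖(i : F)‖ - ‖(w : F)‖ ≤ ‖(i : F) - (w : F)‖ := norm_sub_norm_le _ _
    have h3 : ‖(i : F) - (w : F)‖ = ‖(w : F) - (i : F)‖ := norm_sub_rev _ _
    constructor <;> linarith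
  have key1 : ∀ w : {y : F // y ≠ 0}, ‖g0 w‖ ≤ 3 / 2 * C * ‖(w : F)‖ := by
    intro w
    have hsum1 : ∑ i ∈ f.finsupport w, f i w = 1 := f.sum_finsupport (mem_univ w)
    have hfin : g0 w = ∑ i ∈ f.finsupport w, f i w • x i :=
      (f.sum_finsupport_smul_eq_finsum (fun i _ => x i)).symm
    rw [hfin]
    calc ‖∑ i ∈ f.finsupport w, f i w • x i‖
        ≤ ∑ i ∈ f.finsupport w, f i w * (C * (3 / 2 * ‖(w : F)‖)) := by
          refine norm_sum_le_of_le _ (fun i hi => ?_)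
          rw [norm_smul, Real.norm_of_nonneg (f.nonneg i w)]
          refine mul_le_mul_of_nonneg_left ?_ (f.nonneg i w)
          refine (hx2 i).trans ?_
          exact mul_le_mul_of_nonneg_left (hbd w i hi).1 hC0.le
      _ = C * (3 / 2 * ‖(w : F)‖) := by rw [← Finset.sum_mul, hsum1, one_mul]
      _ = 3 / 2 * C * ‖(w : F)‖ := by ring
  have key2 : ∀ w : {y : F // y ≠ 0}, ‖T (g0 w) - (w : F)‖ ≤ 1 / 2 * ‖(w : F)‖ := by
    intro w
    have hsum1 : ∑ i ∈ f.finsupport w, f i w = 1 := f.sum_finsupport (mem_univ w)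
    have hfin : g0 w = ∑ i ∈ f.finsupport w, f i w • x i :=
      (f.sum_finsupport_smul_eq_finsum (fun i _ => x i)).symm
    have hTg : T (g0 w) = ∑ i ∈ f.finsupport w, f i w • (i : F) := by
      rw [hfin, map_sum]
      exact Finset.sum_congr rfl (fun i _ => by rw [map_smul, hx1])
    have hrw : T (g0 w) - (w : F)
        = ∑ i ∈ f.finsupport w, f i w • ((i : F) - (w : F)) := by
      rw [hTg]
      simp only [smul_sub]
      rw [Finset.sum_sub_distrib, ← Finset.sum_smul, hsum1, one_smul]
    rw [hrw]
    calc ‖∑ i ∈ f.finsupport w, f i w • ((i : F) - (w : F))‖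
        ≤ ∑ i ∈ f.finsupport w, f i w * (1 / 2 * ‖(w : F)‖) := by
          refine norm_sum_le_of_le _ (fun i hi => ?_)
          rw [norm_smul, Real.norm_of_nonneg (f.nonneg i w)]
          exact mul_le_mul_of_nonneg_left (hbd w i hi).2 (f.nonneg i w)
      _ = 1 / 2 * ‖(w : F)‖ := by rw [← Finset.sum_mul, hsum1, one_mul]
  classical
  refine ⟨3 / 2 * C, by positivity, fun y => if h : y = 0 then 0 else g0 ⟨y, h⟩, ?_, ?_, ?_⟩
  · rw [continuous_iff_continuousAt]
    intro y
    by_cases hy : y = 0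
    · subst hy
      have hb : ∀ z : F, ‖(if h : z = 0 then (0 : E) else g0 ⟨z, h⟩)‖ ≤ 3 / 2 * C * ‖z‖ := by
        intro z
        by_cases hz : z = 0
        · subst hz; simp
        · rw [dif_neg hz]; exact key1 ⟨z, hz⟩
      have h0 : (fun y : F => if h : y = 0 then (0 : E) else g0 ⟨y, h⟩) 0 = 0 := by simp
      unfold ContinuousAt
      rw [h0]
      refine squeeze_zero_norm hb ?_
      have := (continuous_const.mul continuous_norm).tendsto (0 : F)
        (f := fun z : F => 3 / 2 * C * ‖z‖)
      simpa using this
    · have hopen : IsOpen {z : F | z ≠ 0} := isOpen_compl_singleton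
      have hco : ContinuousOn (fun y : F => if h : y = 0 then (0 : E) else g0 ⟨y, h⟩)
          {z : F | z ≠ 0} := by
        rw [continuousOn_iff_continuous_restrict]
        have hres : Set.domRestrict {z : F | z ≠ 0}
            (fun y : F => if h : y = 0 then (0 : E) else g0 ⟨y, h⟩)
            = fun z : {z : F | z ≠ 0} => g0 ⟨z.1, z.2⟩ :=
          funext fun z => dif_neg z.2
        rw [hres]
        exact hg0cont.comp (Continuous.subtype_mk continuous_subtype_val _)
      exact hco.continuousAt (hopen.mem_nhds hy)
  · intro y
    by_cases hy : y = 0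
    · subst hy; simp
    · show ‖(if h : y = 0 then (0:E) else g0 ⟨y, h⟩)‖ ≤ 3 / 2 * C * ‖y‖
      rw [dif_neg hy]; exact key1 ⟨y, hy⟩
  · intro y
    by_cases hy : y = 0
    · subst hy; simp
    · show ‖T (if h : y = 0 then (0:E) else g0 ⟨y, h⟩) - y‖ ≤ 1 / 2 * ‖y‖
      rw [dif_neg hy]; exact key2 ⟨y, hy⟩

/-- **Bartle–Graves**: a surjective bounded operator between Banach spaces has a continuous
(not necessarily linear) right inverse. -/
lemma bartle_graves (T : E →L[ℝ] F) (hsurj : Function.Surjective T) :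
    ∃ B : F → E, Continuous B ∧ ∀ y, T (B y) = y := by
  obtain ⟨C, hC0, g, hgc, hgle, hgres⟩ := bg_approx T hsurj
  set h : F → F := fun y => y - T (g y) with hh
  have hhc : Continuous h := continuous_id.sub (T.continuous.comp hgc)
  set u : ℕ → F → F := fun n => h^[n] with hu
  have hucont : ∀ n, Continuous (u n) := fun n => hhc.iterate n
  have hun : ∀ n y, ‖u n y‖ ≤ (1 / 2 : ℝ) ^ n * ‖y‖ := by
    intro n
    induction n with
    | zero => intro y; simp [hu]
    | succ n ih =>
      intro y
      have : u (n + 1) y = h (u n y) := Function.iterate_succ_apply' h n y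
      rw [this]
      have h1 : ‖h (u n y)‖ ≤ 1 / 2 * ‖u n y‖ := by
        rw [hh]
        simpa [norm_sub_rev] using hgres (u n y)
      calc ‖h (u n y)‖ ≤ 1 / 2 * ‖u n y‖ := h1
        _ ≤ 1 / 2 * ((1 / 2 : ℝ) ^ n * ‖y‖) := by nlinarith [ih y]
        _ = (1 / 2 : ℝ) ^ (n + 1) * ‖y‖ := by ring
  have hterm_bound : ∀ (K : ℝ) (n : ℕ) (y : F), ‖y‖ ≤ K → ‖g (u n y)‖ ≤ C * ((1 / 2 : ℝ) ^ n * K) := by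
    intro K n y hyK
    refine (hgle _).trans ?_
    have h2 : ‖u n y‖ ≤ (1 / 2 : ℝ) ^ n * K := by
      refine (hun n y).trans ?_
      have : (0 : ℝ) ≤ (1 / 2 : ℝ) ^ n := by positivity
      nlinarith
    nlinarith
  have hsummable : ∀ y : F, Summable (fun n => g (u n y)) := by
    intro y
    refine Summable.of_norm_bounded (?_ : Summable (fun n => C * ((1 / 2 : ℝ) ^ n * ‖y‖)))
      (fun n => hterm_bound ‖y‖ n y le_rfl)
    simpa [mul_comm, mul_assoc, mul_left_comm] using
      (summable_geometric_two.mul_left (C * ‖y‖))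
  set B : F → E := fun y => ∑' n, g (u n y) with hB
  refine ⟨B, ?_, ?_⟩
  · rw [continuous_iff_continuousAt]
    intro y0
    have hball : ContinuousOn B (Metric.ball y0 (1 + ‖y0‖)) := by
      refine continuousOn_tsum (u := fun n => C * ((1 / 2 : ℝ) ^ n * (‖y0‖ + (1 + ‖y0‖))))
        (fun n => (hgc.comp (hucont n)).continuousOn) ?_ ?_
      · simpa [mul_comm, mul_assoc, mul_left_comm] using
          (summable_geometric_two.mul_left (C * (‖y0‖ + (1 + ‖y0‖))))
      · intro n y hy
        refine hterm_bound _ n y ?_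
        have := mem_ball_iff_norm.1 hy
        have h3 := norm_sub_norm_le y y0
        linarith
    exact hball.continuousAt (Metric.isOpen_ball.mem_nhds (by
      simp [Metric.mem_ball]
      positivity))
  · intro y
    have hs := hsummable y
    have h1 : HasSum (fun n => T (g (u n y))) (T (B y)) := hs.hasSum.mapL T
    have hterm : ∀ n, T (g (u n y)) = u n y - u (n + 1) y := by
      intro n
      have : u (n + 1) y = h (u n y) := Function.iterate_succ_apply' h n y
      rw [this, hh]
      simp
    have h2 : HasSum (fun n => T (g (u n y))) y := by
      have hnorm : Summable (fun n => ‖T (g (u n y))‖) := by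
        have hb : Summable (fun n : ℕ => ‖T‖ * (C * ‖y‖) * (1 / 2 : ℝ) ^ n) := by
          simpa [mul_comm, mul_assoc, mul_left_comm] using
            (summable_geometric_two.mul_left (‖T‖ * (C * ‖y‖)))
        refine Summable.of_nonneg_of_le (fun n => norm_nonneg _) (fun n => ?_) hb
        have hb2 := hterm_bound ‖y‖ n y le_rfl
        have hT : (0 : ℝ) ≤ ‖T‖ := norm_nonneg _
        calc ‖T (g (u n y))‖ ≤ ‖T‖ * ‖g (u n y)‖ := T.le_opNorm _
          _ ≤ ‖T‖ * (C * ((1 / 2 : ℝ) ^ n * ‖y‖)) := by nlinarith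
          _ = ‖T‖ * (C * ‖y‖) * (1 / 2 : ℝ) ^ n := by ring
      rw [hasSum_iff_tendsto_nat_of_summable_norm hnorm]
      have hps : ∀ n : ℕ, ∑ i ∈ Finset.range n, T (g (u i y)) = y - u n y := by
        intro n
        calc ∑ i ∈ Finset.range n, T (g (u i y))
            = ∑ i ∈ Finset.range n, (u i y - u (i + 1) y) :=
              Finset.sum_congr rfl (fun i _ => hterm i)
          _ = u 0 y - u n y := Finset.sum_range_sub' (fun i => u i y) n
          _ = y - u n y := by simp [hu]
      simp only [hps]
      have hu0 : Tendsto (fun n : ℕ => u n y) atTop (𝓝 0) := by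
        refine squeeze_zero_norm (fun n => hun n y) ?_
        have := (tendsto_pow_atTop_nhds_zero_of_lt_one (by norm_num : (0:ℝ) ≤ 1 / 2)
          (by norm_num : (1:ℝ) / 2 < 1)).mul_const ‖y‖
        simpa using this
      have := tendsto_const_nhds (x := y) (f := atTop (α := ℕ)) |>.sub hu0
      simpa using this
    exact h1.unique h2

end BartleGraves

/-- `R(A)` is closed if and only if there is a continuous (possibly nonlinear) map
`B : closure R(A) → X` with `A (B (A x)) = A x` for all `x`. -/
theorem stmt_16
    {X Y : Type*} [NormedAddCommGroup X] [NormedSpace ℝ X] [CompleteSpace X]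
    [NormedAddCommGroup Y] [NormedSpace ℝ Y] [CompleteSpace Y]
    (A : X →L[ℝ] Y) :
    IsClosed ((LinearMap.range (A : X →ₗ[ℝ] Y) : Submodule ℝ Y) : Set Y) ↔
    ∃ B : closure ((LinearMap.range (A : X →ₗ[ℝ] Y) : Submodule ℝ Y) : Set Y) → X,
      Continuous B ∧
      ∀ x : X, A (B ⟨A x, subset_closure (LinearMap.mem_range_self (A : X →ₗ[ℝ] Y) x)⟩) = A x := by
  constructor
  · intro hcl
    haveI : CompleteSpace (LinearMap.range (A : X →ₗ[ℝ] Y) : Submodule ℝ Y) := hcl.completeSpace_coe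
    set T : X →L[ℝ] (LinearMap.range (A : X →ₗ[ℝ] Y) : Submodule ℝ Y) :=
      A.codRestrict _ (fun x => LinearMap.mem_range_self (A : X →ₗ[ℝ] Y) x) with hT
    have hsurj : Function.Surjective T := by
      rintro ⟨y, hy⟩
      obtain ⟨x, hx⟩ := LinearMap.mem_range.1 hy
      exact ⟨x, Subtype.ext hx⟩
    obtain ⟨B', hB'c, hB'⟩ := bartle_graves T hsurj
    refine ⟨fun y => B' ⟨y.1, by exact hcl.closure_eq.subset y.2⟩, ?_, ?_⟩
    · exact hB'c.comp (Continuous.subtype_mk continuous_subtype_val _)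
    · intro x
      exact congrArg Subtype.val (hB' ⟨A x, LinearMap.mem_range_self (A : X →ₗ[ℝ] Y) x⟩)
  · rintro ⟨B, hBc, hB⟩
    have hd : Dense {z : closure ((LinearMap.range (A : X →ₗ[ℝ] Y) : Submodule ℝ Y) : Set Y) | (z : Y) ∈ ((LinearMap.range (A : X →ₗ[ℝ] Y) : Submodule ℝ Y) : Set Y)} := by
      rw [dense_iff_inter_open]
      rintro U hU ⟨z, hz⟩
      obtain ⟨V, hVopen, hVU⟩ := isOpen_induced_iff.1 hU
      have hzV : (z : Y) ∈ V := by
        rw [← hVU] at hz; exact hz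
      obtain ⟨w, hwV, hwR⟩ := mem_closure_iff.1 z.2 V hVopen hzV
      refine ⟨⟨w, subset_closure hwR⟩, ?_, hwR⟩
      rw [← hVU]; exact hwV
    have heq : (fun z : closure ((LinearMap.range (A : X →ₗ[ℝ] Y) : Submodule ℝ Y) : Set Y) => A (B z))
        = (fun z : closure ((LinearMap.range (A : X →ₗ[ℝ] Y) : Submodule ℝ Y) : Set Y) => (z : Y)) := by
      refine Continuous.ext_on hd (A.continuous.comp hBc) continuous_subtype_val ?_
      intro z hz
      obtain ⟨x, hx⟩ := LinearMap.mem_range.1 hz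
      have hzx : z = ⟨A x, subset_closure (LinearMap.mem_range_self (A : X →ₗ[ℝ] Y) x)⟩ :=
        Subtype.ext hx.symm
      rw [hzx]
      simpa using hB x
    refine isClosed_of_closure_subset ?_
    intro y hy
    have := congrFun heq ⟨y, hy⟩
    exact LinearMap.mem_range.2 ⟨B ⟨y, hy⟩, this⟩
end
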